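/- arXiv:2002.05094 — 8 statements merged into one kernel-verified Lean document; each statement's English description precedes it below -/
import Mathlib

section
/- Let (Y,ν) be a standard probability space and let S be an invertible ν-nonsingular transformation of Y. If the series Σ_{n=1}^∞ ∫_Y √( d(ν∘S^n)/dν ) dν converges (i.e. Σ_{n=1}^∞ ⟨U_S^n 1, 1⟩ < ∞, where U_S is the Koopman operator), then S is totally dissipative. -/
open MeasureTheory Filter Set

def TotallyDissipative {Y : Type*} [MeasurableSpace Y] (S : Equiv.Perm Y)
    (ν : Measure Y) : Prop :=
  ∃ B : Set Y, MeasurableSet B ∧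
    (Pairwise fun m n : ℤ => Disjoint (⇑(S ^ m) '' B) (⇑(S ^ n) '' B)) ∧
    ν (Set.univ \ ⋃ n : ℤ, ⇑(S ^ n) '' B) = 0

/-!
Write `ω_m = d(ν ∘ S^m)/dν`. The function `g = ∑_{m ∈ ℤ} √ω_m` is integrable: the Hellinger
symmetry `∫ √ω_{-m} dν = ∫ √ω_m dν` lets the hypothesis control both halves of the sum. The
cocycle identity `ω_{n+m} = (ω_n ∘ S^m) · ω_m` gives `g ∘ S^m = g / √ω_m`, so for almost every `y`
the positive function `1 / g` has sum at most `1` along the orbit of `y`. Hence it attains its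
maximum on the orbit at finitely many points only; breaking ties with a Borel embedding of `Y`
into `ℝ` singles out one point of almost every orbit, and these points form a wandering set whose
translates cover `Y` up to a null set.
-/

open scoped ENNReal

section RadonNikodym

variable {Y : Type*} [MeasurableSpace Y] {μ ν : Measure Y}

theorem lintegral_rnDeriv_rpow_one_sub [SigmaFinite μ] [SigmaFinite ν] (hμν : μ ≪ ν)
    (hνμ : ν ≪ μ) (p : ℝ) :
    ∫⁻ x, ν.rnDeriv μ x ^ (1 - p) ∂μ = ∫⁻ x, μ.rnDeriv ν x ^ p ∂ν := by
  rw [← lintegral_rnDeriv_mul hμν ((Measure.measurable_rnDeriv ν μ).pow_const _).aemeasurable]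
  refine lintegral_congr_ae ?_
  filter_upwards [hνμ.ae_le (Measure.inv_rnDeriv hμν), hνμ.ae_le (Measure.rnDeriv_pos hμν),
    Measure.rnDeriv_lt_top μ ν] with x hinv hpos hlt
  conv_lhs => rw [← ENNReal.rpow_one (μ.rnDeriv ν x)]
  rw [← hinv, Pi.inv_apply, ← ENNReal.rpow_neg_one, ← ENNReal.rpow_mul,
    ← ENNReal.rpow_add _ _ hpos.ne' hlt.ne]
  ring_nf

theorem lintegral_rnDeriv_rpow_ne_top [IsFiniteMeasure μ] [IsFiniteMeasure ν] {p : ℝ}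
    (hp₀ : 0 ≤ p) (hp₁ : p ≤ 1) : ∫⁻ x, μ.rnDeriv ν x ^ p ∂ν ≠ ⊤ := by
  have hle : ∀ a : ℝ≥0∞, a ^ p ≤ 1 + a := fun a =>
    (le_total a 1).elim (fun ha => (ENNReal.rpow_le_one ha hp₀).trans le_self_add)
      fun ha => (ENNReal.rpow_le_rpow_of_exponent_le ha hp₁).trans
        ((ENNReal.rpow_one a).trans_le le_add_self)
  refine (lt_of_le_of_lt ?_
    (ENNReal.add_lt_top.2 ⟨measure_lt_top ν univ, measure_lt_top μ univ⟩)).ne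
  calc ∫⁻ x, μ.rnDeriv ν x ^ p ∂ν ≤ ∫⁻ x, (1 + μ.rnDeriv ν x) ∂ν := lintegral_mono fun x => hle _
    _ = ν univ + ∫⁻ x, μ.rnDeriv ν x ∂ν := by
      rw [lintegral_add_left measurable_const, lintegral_const, one_mul]
    _ ≤ ν univ + μ univ := add_le_add_right Measure.lintegral_rnDeriv_le _

theorem integral_sqrt_toReal_rnDeriv (μ : Measure Y) [SigmaFinite μ] :
    ∫ x, √(μ.rnDeriv ν x).toReal ∂ν = (∫⁻ x, μ.rnDeriv ν x ^ (1 / 2 : ℝ) ∂ν).toReal := by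
  simp_rw [Real.sqrt_eq_rpow, ENNReal.toReal_rpow]
  refine integral_toReal ((Measure.measurable_rnDeriv μ ν).pow_const _).aemeasurable ?_
  filter_upwards [Measure.rnDeriv_lt_top μ ν] with x hx
  exact ENNReal.rpow_lt_top_of_nonneg (by norm_num) hx.ne

end RadonNikodym

theorem ENNReal.tsum_ne_top_of_summable_toReal {ι : Type*} {a : ι → ℝ≥0∞} (ha : ∀ i, a i ≠ ⊤)
    (h : Summable fun i => (a i).toReal) : ∑' i, a i ≠ ⊤ := by
  simpa only [ENNReal.coe_toNNReal (ha _)] using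
    (ENNReal.tsum_coe_ne_top_iff_summable_coe (f := fun i => (a i).toNNReal)).mpr h

namespace Equiv.Perm

section FundamentalDomain

variable {Y α : Type*} (S : Perm Y)

def strictOrbitMaxSet [LT α] (k : Y → α) : Set Y :=
  {x | ∀ n : ℤ, n ≠ 0 → k ((S ^ n) x) < k x}

theorem pairwise_disjoint_zpow_image_strictOrbitMaxSet [Preorder α] (k : Y → α) :
    Pairwise fun m n : ℤ =>
      _root_.Disjoint (⇑(S ^ m) '' S.strictOrbitMaxSet k)
        (⇑(S ^ n) '' S.strictOrbitMaxSet k) := by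
  intro m n hmn
  rw [Set.disjoint_left]
  rintro _ ⟨a, ha, rfl⟩ ⟨b, hb, hab⟩
  have hb' : b = (S ^ (m - n)) a := by
    apply (S ^ n).injective
    rw [hab, ← Perm.mul_apply, ← zpow_add, add_sub_cancel]
  have ha' : a = (S ^ (n - m)) b := by
    rw [hb', ← Perm.mul_apply, ← zpow_add, sub_add_sub_cancel, sub_self, zpow_zero, Perm.one_apply]
  have h₁ := ha (m - n) (sub_ne_zero.mpr hmn)
  have h₂ := hb (n - m) (sub_ne_zero.mpr hmn.symm)
  rw [← hb'] at h₁
  rw [← ha'] at h₂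
  exact lt_asymm h₁ h₂

theorem mem_iUnion_zpow_image_strictOrbitMaxSet [LinearOrder α] {k : Y → α}
    (hk : Function.Injective k) {y : Y} (hfin : {m : ℤ | k y ≤ k ((S ^ m) y)}.Finite) :
    y ∈ ⋃ n : ℤ, ⇑(S ^ n) '' S.strictOrbitMaxSet k := by
  obtain ⟨m₀, hm₀, hmax⟩ := Set.exists_max_image _ (fun m => k ((S ^ m) y)) hfin
    ⟨0, by simp⟩
  have hle : ∀ m : ℤ, k ((S ^ m) y) ≤ k ((S ^ m₀) y) := fun m =>
    (le_total (k y) (k ((S ^ m) y))).elim (hmax m) fun h => h.trans hm₀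
  have hshift : ∀ n : ℤ, (S ^ n) ((S ^ m₀) y) = (S ^ (n + m₀)) y := fun n => by
    rw [zpow_add, Perm.mul_apply]
  refine mem_iUnion.mpr ⟨-m₀, (S ^ m₀) y, fun n hn => ?_, by
    rw [← Perm.mul_apply, ← zpow_add, neg_add_cancel, zpow_zero, Perm.one_apply]⟩
  refine (hshift n ▸ hle (n + m₀)).lt_of_ne fun heq => ?_
  -- a periodic orbit would put every `m₀ + j * n` in the finite set `hfin`
  have hper : (S ^ n) ((S ^ m₀) y) = (S ^ m₀) y := hk (hshift n ▸ heq)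
  refine Set.infinite_of_injective_forall_mem (f := fun j : ℤ => j * n + m₀)
    (fun i j hij => mul_right_cancel₀ hn (add_right_cancel hij)) (fun j => ?_) hfin
  show k y ≤ k ((S ^ (j * n + m₀)) y)
  rw [zpow_add, Perm.mul_apply, zpow_mul', Perm.zpow_apply_eq_self_of_apply_eq_self hper]
  exact hm₀

theorem measurableSet_strictOrbitMaxSet_toLex [MeasurableSpace Y]
    (hS : ∀ n : ℤ, Measurable ⇑(S ^ n)) {c : Y → ℝ≥0∞} (hc : Measurable c) {ψ : Y → ℝ}
    (hψ : Measurable ψ) : MeasurableSet (S.strictOrbitMaxSet fun x => toLex (c x, ψ x)) := by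
  simp only [strictOrbitMaxSet, Prod.Lex.toLex_lt_toLex, ofPred_forall]
  refine MeasurableSet.iInter fun n => MeasurableSet.iInter fun _ => ?_
  exact (measurableSet_lt (hc.comp (hS n)) hc).union
    ((measurableSet_eq_fun (hc.comp (hS n)) hc).inter (measurableSet_lt (hψ.comp (hS n)) hψ))

end FundamentalDomain

section Nonsingular

open Measure

variable {Y : Type*} [MeasurableSpace Y] {ν : Measure Y} {S : Perm Y}

theorem quasiMeasurePreserving_zpow (hS : QuasiMeasurePreserving S ν ν)
    (hS' : QuasiMeasurePreserving S.symm ν ν) : ∀ m : ℤ, QuasiMeasurePreserving ⇑(S ^ m) ν ν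
  | (n : ℕ) => by
    rw [zpow_natCast, coe_pow]
    exact hS.iterate n
  | .negSucc n => by
    rw [zpow_negSucc, ← inv_pow, coe_pow, inv_def]
    exact hS'.iterate (n + 1)

theorem measurableEmbedding_zpow (hS : QuasiMeasurePreserving S ν ν)
    (hS' : QuasiMeasurePreserving S.symm ν ν) (m : ℤ) : MeasurableEmbedding ⇑(S ^ m) :=
  (MeasurableEquiv.mk (S ^ m) (quasiMeasurePreserving_zpow hS hS' m).measurable <| by
    simpa only [← inv_def, ← zpow_neg] using
      (quasiMeasurePreserving_zpow hS hS' (-m)).measurable).measurableEmbedding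

theorem map_zpow_map_zpow (hS : QuasiMeasurePreserving S ν ν)
    (hS' : QuasiMeasurePreserving S.symm ν ν) (m n : ℤ) :
    (ν.map ⇑(S ^ m)).map ⇑(S ^ n) = ν.map ⇑(S ^ (n + m)) := by
  rw [map_map (quasiMeasurePreserving_zpow hS hS' n).measurable
    (quasiMeasurePreserving_zpow hS hS' m).measurable, ← coe_mul, ← zpow_add]

theorem absolutelyContinuous_map_zpow (hS : QuasiMeasurePreserving S ν ν)
    (hS' : QuasiMeasurePreserving S.symm ν ν) (m : ℤ) : ν ≪ ν.map ⇑(S ^ m) := by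
  have h := (quasiMeasurePreserving_zpow hS hS' (-m)).absolutelyContinuous.map
    (quasiMeasurePreserving_zpow hS hS' m).measurable
  rwa [map_zpow_map_zpow hS hS', add_neg_cancel, zpow_zero, coe_one, Measure.map_id] at h

variable (S ν) in
/-- `d(ν ∘ S^m)/dν`, where `ν ∘ S^m = ν.map (S^(-m))`. -/
noncomputable def rnCocycle (m : ℤ) : Y → ℝ≥0∞ :=
  (ν.map ⇑(S ^ (-m))).rnDeriv ν

theorem measurable_rnCocycle (m : ℤ) : Measurable (S.rnCocycle ν m) :=
  Measure.measurable_rnDeriv _ _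

theorem rnCocycle_add_ae [IsFiniteMeasure ν] (hS : QuasiMeasurePreserving S ν ν)
    (hS' : QuasiMeasurePreserving S.symm ν ν) (n m : ℤ) :
    S.rnCocycle ν (n + m) =ᵐ[ν] fun y => S.rnCocycle ν n ((S ^ m) y) * S.rnCocycle ν m y := by
  have hmap : (ν.map ⇑(S ^ (-n))).map ⇑(S ^ (-m)) = ν.map ⇑(S ^ (-(n + m))) := by
    rw [map_zpow_map_zpow hS hS', neg_add_rev]
  have hemb := (measurableEmbedding_zpow hS hS' (-m)).rnDeriv_map (ν.map ⇑(S ^ (-n))) ν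
  rw [hmap] at hemb
  have hshift : ∀ᵐ z ∂ν.map ⇑(S ^ (-m)),
      (ν.map ⇑(S ^ (-(n + m)))).rnDeriv (ν.map ⇑(S ^ (-m))) z = S.rnCocycle ν n ((S ^ m) z) := by
    rw [(measurableEmbedding_zpow hS hS' (-m)).ae_map_iff]
    filter_upwards [hemb] with x hx
    rw [hx, ← Perm.mul_apply, ← zpow_add, add_neg_cancel, zpow_zero, Perm.one_apply]
    rfl
  have hac : ν.map ⇑(S ^ (-(n + m))) ≪ ν.map ⇑(S ^ (-m)) :=
    (quasiMeasurePreserving_zpow hS hS' _).absolutelyContinuous.trans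
      (absolutelyContinuous_map_zpow hS hS' _)
  filter_upwards [(absolutelyContinuous_map_zpow hS hS' (-m)).ae_le hshift,
    Measure.rnDeriv_mul_rnDeriv hac] with y hy hchain
  rw [← hy]
  exact hchain.symm

theorem rnCocycle_pos_ae [IsFiniteMeasure ν] (hS : QuasiMeasurePreserving S ν ν)
    (hS' : QuasiMeasurePreserving S.symm ν ν) (m : ℤ) : ∀ᵐ y ∂ν, 0 < S.rnCocycle ν m y :=
  (absolutelyContinuous_map_zpow hS hS' (-m)).ae_le
    (Measure.rnDeriv_pos (quasiMeasurePreserving_zpow hS hS' (-m)).absolutelyContinuous)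

theorem rnCocycle_lt_top_ae [IsFiniteMeasure ν] (m : ℤ) : ∀ᵐ y ∂ν, S.rnCocycle ν m y < ⊤ :=
  Measure.rnDeriv_lt_top _ _

theorem lintegral_rnCocycle_neg_rpow_half [IsFiniteMeasure ν] (hS : QuasiMeasurePreserving S ν ν)
    (hS' : QuasiMeasurePreserving S.symm ν ν) (m : ℤ) :
    ∫⁻ y, S.rnCocycle ν (-m) y ^ (1 / 2 : ℝ) ∂ν = ∫⁻ y, S.rnCocycle ν m y ^ (1 / 2 : ℝ) ∂ν := by
  have hemb := (measurableEmbedding_zpow hS hS' (-m)).rnDeriv_map (ν.map ⇑(S ^ m)) ν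
  rw [map_zpow_map_zpow hS hS', neg_add_cancel, zpow_zero, coe_one, Measure.map_id] at hemb
  calc ∫⁻ y, S.rnCocycle ν (-m) y ^ (1 / 2 : ℝ) ∂ν
      = ∫⁻ y, ν.rnDeriv (ν.map ⇑(S ^ (-m))) ((S ^ (-m)) y) ^ (1 / 2 : ℝ) ∂ν := by
        refine lintegral_congr_ae ?_
        filter_upwards [hemb] with y hy
        rw [hy, rnCocycle, neg_neg]
    _ = ∫⁻ y, ν.rnDeriv (ν.map ⇑(S ^ (-m))) y ^ (1 - 1 / 2 : ℝ) ∂ν.map ⇑(S ^ (-m)) := by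
        rw [(measurableEmbedding_zpow hS hS' (-m)).lintegral_map]
        norm_num
    _ = ∫⁻ y, S.rnCocycle ν m y ^ (1 / 2 : ℝ) ∂ν :=
        lintegral_rnDeriv_rpow_one_sub
          (quasiMeasurePreserving_zpow hS hS' (-m)).absolutelyContinuous
          (absolutelyContinuous_map_zpow hS hS' (-m)) _

variable (S ν) in
noncomputable def sqrtCocycleSum (y : Y) : ℝ≥0∞ :=
  ∑' m : ℤ, S.rnCocycle ν m y ^ (1 / 2 : ℝ)

theorem measurable_sqrtCocycleSum : Measurable (S.sqrtCocycleSum ν) :=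
  Measurable.tsum fun m => (S.measurable_rnCocycle m).pow_const _

theorem rpow_mul_sqrtCocycleSum_zpow_apply {y : Y} {m : ℤ}
    (hy : ∀ n : ℤ, S.rnCocycle ν (n + m) y = S.rnCocycle ν n ((S ^ m) y) * S.rnCocycle ν m y) :
    S.sqrtCocycleSum ν ((S ^ m) y) * S.rnCocycle ν m y ^ (1 / 2 : ℝ) = S.sqrtCocycleSum ν y := by
  simp only [sqrtCocycleSum, ← ENNReal.tsum_mul_right,
    ← ENNReal.mul_rpow_of_nonneg _ _ (by norm_num : (0 : ℝ) ≤ 1 / 2), ← hy]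
  exact (Equiv.addRight m).tsum_eq fun n => S.rnCocycle ν n y ^ (1 / 2 : ℝ)

theorem tsum_inv_sqrtCocycleSum_zpow_apply_le_one {y : Y}
    (hy : ∀ n m : ℤ, S.rnCocycle ν (n + m) y = S.rnCocycle ν n ((S ^ m) y) * S.rnCocycle ν m y)
    (hpos : ∀ m : ℤ, 0 < S.rnCocycle ν m y) (hlt : ∀ m : ℤ, S.rnCocycle ν m y < ⊤) :
    ∑' m : ℤ, (S.sqrtCocycleSum ν ((S ^ m) y))⁻¹ ≤ 1 := by
  have hinv : ∀ m : ℤ, (S.sqrtCocycleSum ν ((S ^ m) y))⁻¹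
      = S.rnCocycle ν m y ^ (1 / 2 : ℝ) * (S.sqrtCocycleSum ν y)⁻¹ := fun m => by
    have h0 : S.rnCocycle ν m y ^ (1 / 2 : ℝ) ≠ 0 := by
      simp [ENNReal.rpow_eq_zero_iff, (hpos m).ne', (hlt m).ne]
    have htop : S.rnCocycle ν m y ^ (1 / 2 : ℝ) ≠ ⊤ := by
      simp [ENNReal.rpow_eq_top_iff, (hpos m).ne', (hlt m).ne]
    rw [← rpow_mul_sqrtCocycleSum_zpow_apply (hy · m), ENNReal.mul_inv (Or.inr htop) (Or.inr h0),
      mul_comm, mul_assoc, ENNReal.inv_mul_cancel h0 htop, mul_one]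
  simp only [hinv, ENNReal.tsum_mul_right]
  exact ENNReal.mul_inv_le_one _

theorem tsum_lintegral_rnCocycle_ne_top [IsFiniteMeasure ν]
    (hsum : Summable fun n : ℕ =>
      ∫ y, √((ν.map ⇑((S ^ (n + 1))⁻¹)).rnDeriv ν y).toReal ∂ν) :
    ∑' n : ℕ, ∫⁻ y, S.rnCocycle ν (n + 1) y ^ (1 / 2 : ℝ) ∂ν ≠ ⊤ := by
  refine ENNReal.tsum_ne_top_of_summable_toReal
    (fun n => lintegral_rnDeriv_rpow_ne_top (by norm_num) (by norm_num)) (hsum.congr fun n => ?_)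
  rw [integral_sqrt_toReal_rnDeriv, rnCocycle, zpow_neg, ← Nat.cast_succ, zpow_natCast]

theorem lintegral_sqrtCocycleSum_ne_top [IsFiniteMeasure ν] (hS : QuasiMeasurePreserving S ν ν)
    (hS' : QuasiMeasurePreserving S.symm ν ν)
    (h : ∑' n : ℕ, ∫⁻ y, S.rnCocycle ν (n + 1) y ^ (1 / 2 : ℝ) ∂ν ≠ ⊤) :
    ∫⁻ y, S.sqrtCocycleSum ν y ∂ν ≠ ⊤ := by
  unfold sqrtCocycleSum
  rw [lintegral_tsum fun m => ((measurable_rnCocycle m).pow_const _).aemeasurable,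
    ← tsum_nat_add_neg_add_one ENNReal.summable, ENNReal.tsum_add,
    tsum_eq_zero_add' ENNReal.summable]
  simp only [lintegral_rnCocycle_neg_rpow_half hS hS', Nat.cast_add, Nat.cast_one, Nat.cast_zero]
  exact ENNReal.add_ne_top.2 ⟨ENNReal.add_ne_top.2
    ⟨lintegral_rnDeriv_rpow_ne_top (by norm_num) (by norm_num), h⟩, h⟩

theorem ae_finite_setOf_inv_sqrtCocycleSum_le [IsFiniteMeasure ν]
    (hS : QuasiMeasurePreserving S ν ν) (hS' : QuasiMeasurePreserving S.symm ν ν)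
    (h : ∑' n : ℕ, ∫⁻ y, S.rnCocycle ν (n + 1) y ^ (1 / 2 : ℝ) ∂ν ≠ ⊤) :
    ∀ᵐ y ∂ν, {m : ℤ | (S.sqrtCocycleSum ν y)⁻¹ ≤ (S.sqrtCocycleSum ν ((S ^ m) y))⁻¹}.Finite := by
  filter_upwards [ae_lt_top' S.measurable_sqrtCocycleSum.aemeasurable
      (lintegral_sqrtCocycleSum_ne_top hS hS' h),
    ae_all_iff.2 fun n => ae_all_iff.2 fun m => rnCocycle_add_ae hS hS' n m,
    ae_all_iff.2 (rnCocycle_pos_ae hS hS'), ae_all_iff.2 rnCocycle_lt_top_ae]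
    with y hy hcoc hpos hlt
  exact ENNReal.finite_const_le_of_tsum_ne_top
    ((tsum_inv_sqrtCocycleSum_zpow_apply_le_one hcoc hpos hlt).trans_lt ENNReal.one_lt_top).ne
    (ENNReal.inv_ne_zero.2 hy.ne)

end Nonsingular

end Equiv.Perm

/-- If `Σ_{n≥1} ∫ √(d(ν∘S^n)/dν) dν < ∞` then the invertible nonsingular
transformation `S` of the standard probability space `(Y,ν)` is totally dissipative.
Here `ν∘S^n` is the measure `A ↦ ν(S^n A)`, i.e. the pushforward of `ν` under `S^{-n}`. -/
theorem stmt0 {Y : Type*} [MeasurableSpace Y] [StandardBorelSpace Y]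
    (ν : Measure Y) [IsProbabilityMeasure ν] (S : Equiv.Perm Y)
    (hS : Measurable ⇑S) (hS' : Measurable ⇑S.symm)
    (hns : ν.map ⇑S ≪ ν ∧ ν ≪ ν.map ⇑S)
    (hsum : Summable fun n : ℕ =>
      ∫ y, Real.sqrt (((ν.map ⇑((S ^ (n + 1))⁻¹)).rnDeriv ν) y).toReal ∂ν) :
    TotallyDissipative S ν := by
  obtain ⟨ψ, hψ⟩ := exists_measurableEmbedding_real Y
  have hS₁ : Measure.QuasiMeasurePreserving S ν ν := ⟨hS, hns.1⟩
  have hS₂ : Measure.QuasiMeasurePreserving S.symm ν ν := by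
    refine ⟨hS', ?_⟩
    simpa [Measure.map_map hS' hS] using hns.2.map hS'
  set c : Y → ℝ≥0∞ := fun y => (S.sqrtCocycleSum ν y)⁻¹
  have hfin := S.ae_finite_setOf_inv_sqrtCocycleSum_le hS₁ hS₂
    (S.tsum_lintegral_rnCocycle_ne_top hsum)
  refine ⟨S.strictOrbitMaxSet fun x => toLex (c x, ψ x),
    S.measurableSet_strictOrbitMaxSet_toLex
      (fun n => (Equiv.Perm.quasiMeasurePreserving_zpow hS₁ hS₂ n).measurable)
      S.measurable_sqrtCocycleSum.inv hψ.measurable,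
    S.pairwise_disjoint_zpow_image_strictOrbitMaxSet _, ?_⟩
  rw [← compl_eq_univ_sdiff, ← mem_ae_iff]
  filter_upwards [hfin] with y hy
  exact S.mem_iUnion_zpow_image_strictOrbitMaxSet
    (fun x x' h => hψ.injective (congrArg Prod.snd (toLex.injective h)))
    (hy.subset fun m hm => Prod.Lex.monotone_fst _ _ hm)
end

section
/- Let S be an invertible nonsingular transformation of a standard probability space (Y,ν) such that for every n > 0 the Radon–Nikodym derivative dν/d(ν∘S^{-n}) belongs to L²(Y,ν), and set b(n) := ‖dν/d(ν∘S^{-n})‖₂². If there exists a sequence (a(n))_{n≥1} of positive reals with Σ_{n=1}^∞ a(n) = ∞ and Σ_{n=1}^∞ a(n)² b(n) < ∞, then S is conservative. -/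
open MeasureTheory Filter Set

/-- A nonsingular transformation `S` of `(Y,ν)` is conservative if every measurable set of
positive measure returns to itself with positive measure under some positive iterate. -/
def Conservative' {Y : Type*} [MeasurableSpace Y] (S : Equiv.Perm Y)
    (ν : Measure Y) : Prop :=
  ∀ B : Set Y, MeasurableSet B → 0 < ν B →
    ∃ n : ℕ, 0 < n ∧ 0 < ν (⇑(S ^ n) ⁻¹' B ∩ B)

/-!
If `S` is not conservative, some set `W` of positive measure is wandering: its preimages
`S⁻ⁿ W` are pairwise disjoint, so `∑ ν(S⁻ⁿ W) ≤ 1`. Two applications of Cauchy–Schwarz to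
`ν W = ∫_W dν/dμₙ dμₙ`, with `μₙ = ν ∘ S⁻ⁿ`, give `ν(W)³ ≤ b(n) μₙ(W)`, hence `∑ 1/b(n) < ∞`.
Since `2|a| ≤ a² b + 1/b`, this makes `∑ a(n)` converge.
-/

open scoped ENNReal

theorem two_mul_abs_le_sq_mul_add_inv (a : ℝ) {b : ℝ} (hb : 0 < b) :
    2 * |a| ≤ a ^ 2 * b + b⁻¹ := by
  have h : a ^ 2 * b + b⁻¹ - 2 * |a| = (|a| * b - 1) ^ 2 * b⁻¹ := by
    field_simp
    rw [← sq_abs a]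
    ring
  have : 0 ≤ (|a| * b - 1) ^ 2 * b⁻¹ := by positivity
  linarith

theorem summable_of_summable_sq_mul_of_summable_inv {ι : Type*} {a b : ι → ℝ}
    (hb : ∀ i, 0 < b i) (hab : Summable fun i => a i ^ 2 * b i)
    (hb_inv : Summable fun i => (b i)⁻¹) : Summable a :=
  .of_norm_bounded ((hab.add hb_inv).div_const 2) fun i => by
    rw [Real.norm_eq_abs, le_div_iff₀ two_pos, mul_comm]
    exact two_mul_abs_le_sq_mul_add_inv (a i) (hb i)

theorem summable_of_summable_sq_mul_of_le_mul {ι : Type*} {a b m : ι → ℝ} {c : ℝ}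
    (hc : 0 < c) (hm_nonneg : ∀ i, 0 ≤ m i) (hm : Summable m) (hbm : ∀ i, c ≤ b i * m i)
    (hab : Summable fun i => a i ^ 2 * b i) : Summable a := by
  have hb : ∀ i, 0 < b i := fun i =>
    pos_of_mul_pos_left (hc.trans_le (hbm i)) (hm_nonneg i)
  refine summable_of_summable_sq_mul_of_summable_inv hb hab
    (.of_nonneg_of_le (fun i => (inv_pos.2 (hb i)).le) (fun i => ?_) (hm.div_const c))
  rw [le_div_iff₀ hc, inv_mul_le_iff₀ (hb i)]
  exact hbm i

namespace MeasureTheory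

open Function

variable {α : Type*} [MeasurableSpace α]

theorem sq_lintegral_le_lintegral_sq_mul_measure_univ (μ : Measure α) {f : α → ℝ≥0∞}
    (hf : AEMeasurable f μ) : (∫⁻ x, f x ∂μ) ^ 2 ≤ (∫⁻ x, f x ^ 2 ∂μ) * μ univ := by
  have h := ENNReal.lintegral_mul_le_Lp_mul_Lq μ Real.HolderConjugate.two_two hf
    (aemeasurable_const (b := (1 : ℝ≥0∞)))
  have hsq : ∀ x : ℝ≥0∞, (x ^ (1 / (2 : ℝ))) ^ 2 = x := fun x => by
    rw [← ENNReal.rpow_natCast, ← ENNReal.rpow_mul]; norm_num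
  simp only [Pi.mul_apply, mul_one, lintegral_const, ENNReal.rpow_two] at h
  simpa only [mul_pow, hsq, one_pow, one_mul] using pow_le_pow_left' h 2

theorem ofReal_integral_toReal_sq {μ : Measure α} {f : α → ℝ≥0∞}
    (hf : MemLp (fun x => (f x).toReal) 2 μ) (hf_ne_top : ∀ᵐ x ∂μ, f x ≠ ∞) :
    ENNReal.ofReal (∫ x, (f x).toReal ^ 2 ∂μ) = ∫⁻ x, f x ^ 2 ∂μ := by
  rw [ofReal_integral_eq_lintegral_ofReal hf.integrable_sq (ae_of_all _ fun x => sq_nonneg _)]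
  refine lintegral_congr_ae ?_
  filter_upwards [hf_ne_top] with x hx
  rw [ENNReal.ofReal_pow ENNReal.toReal_nonneg, ENNReal.ofReal_toReal hx]

theorem exists_wandering_subset {μ : Measure α} {T : α → α} (hT : Measurable T) {s : Set α}
    (hs : MeasurableSet s) (hrec : ∀ n, 0 < n → μ (T^[n] ⁻¹' s ∩ s) = 0) :
    ∃ t ⊆ s, MeasurableSet t ∧ μ t = μ s ∧ Pairwise (Disjoint on fun n => T^[n] ⁻¹' t) := by
  refine ⟨s \ ⋃ n, (T^[n + 1] ⁻¹' s ∩ s), sdiff_subset,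
    hs.diff (.iUnion fun n => (hT.iterate _ hs).inter hs),
    measure_sdiff_null (measure_iUnion_null fun n => hrec _ n.succ_pos), ?_⟩
  refine (pairwise_disjoint_on _).2 fun m n hmn => disjoint_left.2 ?_
  rintro y ⟨hm_mem, hm_not_mem⟩ ⟨hn_mem, -⟩
  refine hm_not_mem (mem_iUnion.2 ⟨n - m - 1, ?_, hm_mem⟩)
  rwa [mem_preimage, ← iterate_add_apply, show n - m - 1 + 1 + m = n by omega]

theorem absolutelyContinuous_map_iterate {μ : Measure α} {T : α → α} (hT : Measurable T)
    (h : μ ≪ μ.map T) (n : ℕ) : μ ≪ μ.map T^[n] := by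
  induction n with
  | zero => simpa using .rfl
  | succ n ih =>
    rw [iterate_succ, ← Measure.map_map (hT.iterate n) hT]
    exact ih.trans (h.map (hT.iterate n))

theorem Measure.pow_three_le_lintegral_rnDeriv_sq_mul_sq {ν μ : Measure α} [IsFiniteMeasure ν]
    [ν.HaveLebesgueDecomposition μ] (hνμ : ν ≪ μ) {s : Set α} (hs : MeasurableSet s) :
    ν s ^ 3 ≤ (∫⁻ x, ν.rnDeriv μ x ^ 2 ∂ν) * μ s ^ 2 := by
  set g := ν.rnDeriv μ
  have hg : Measurable g := Measure.measurable_rnDeriv ν μ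
  have h_dμ : ν s ^ 2 ≤ (∫⁻ x in s, g x ∂ν) * μ s := by
    have h := sq_lintegral_le_lintegral_sq_mul_measure_univ (μ.restrict s) hg.aemeasurable
    have h_sq : ∫⁻ x in s, g x ^ 2 ∂μ = ∫⁻ x in s, g x ∂ν := by
      simp only [sq]
      exact setLIntegral_rnDeriv_mul hνμ hg.aemeasurable hs
    rwa [Measure.restrict_apply_univ, Measure.setLIntegral_rnDeriv' hνμ hs, h_sq] at h
  have h_dν : (∫⁻ x in s, g x ∂ν) ^ 2 ≤ (∫⁻ x, g x ^ 2 ∂ν) * ν s := by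
    have h := sq_lintegral_le_lintegral_sq_mul_measure_univ (ν.restrict s) hg.aemeasurable
    rw [Measure.restrict_apply_univ] at h
    exact h.trans (mul_le_mul_left (setLIntegral_le_lintegral _ _) _)
  rcases eq_or_ne (ν s) 0 with h0 | h0
  · simp [h0]
  refine (ENNReal.mul_le_mul_iff_left h0 (measure_ne_top ν s)).1 ?_
  calc ν s ^ 3 * ν s = (ν s ^ 2) ^ 2 := by ring
    _ ≤ ((∫⁻ x in s, g x ∂ν) * μ s) ^ 2 := by gcongr
    _ = (∫⁻ x in s, g x ∂ν) ^ 2 * μ s ^ 2 := mul_pow _ _ _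
    _ ≤ (∫⁻ x, g x ^ 2 ∂ν) * ν s * μ s ^ 2 := by gcongr
    _ = (∫⁻ x, g x ^ 2 ∂ν) * μ s ^ 2 * ν s := by ring

theorem Measure.measureReal_pow_three_le_integral_rnDeriv_sq_mul {ν μ : Measure α}
    [IsFiniteMeasure ν] [IsProbabilityMeasure μ] (hνμ : ν ≪ μ)
    (hL2 : MemLp (fun x => (ν.rnDeriv μ x).toReal) 2 ν) {s : Set α} (hs : MeasurableSet s) :
    ν.real s ^ 3 ≤ (∫ x, (ν.rnDeriv μ x).toReal ^ 2 ∂ν) * μ.real s := by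
  have h : ν s ^ 3 ≤ (∫⁻ x, ν.rnDeriv μ x ^ 2 ∂ν) * μ s := by
    refine (pow_three_le_lintegral_rnDeriv_sq_mul_sq hνμ hs).trans ?_
    gcongr
    exact pow_le_of_le_one zero_le prob_le_one two_ne_zero
  rw [← ofReal_integral_toReal_sq hL2 (hνμ.ae_le (Measure.rnDeriv_ne_top ν μ))] at h
  have h := ENNReal.toReal_mono (by finiteness) h
  rwa [ENNReal.toReal_mul, ENNReal.toReal_ofReal (integral_nonneg fun x => sq_nonneg _),
    ENNReal.toReal_pow] at h

end MeasureTheory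

theorem stmt1_general {Y : Type*} [MeasurableSpace Y]
    (ν : Measure Y) [IsProbabilityMeasure ν] (S : Equiv.Perm Y)
    (hS : Measurable ⇑S)
    (hns : ν.map ⇑S ≪ ν ∧ ν ≪ ν.map ⇑S)
    (hL2 : ∀ n : ℕ, 0 < n →
      MemLp (fun y => ((ν.rnDeriv (ν.map ⇑(S ^ n))) y).toReal) 2 ν)
    (a : ℕ → ℝ) (hdiv : ¬ Summable a)
    (hconv : Summable fun n : ℕ =>
      a n ^ 2 * ∫ y, (((ν.rnDeriv (ν.map ⇑(S ^ (n + 1)))) y).toReal) ^ 2 ∂ν) :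
    Conservative' S ν := by
  intro B hB hB_pos
  by_contra! hrec
  simp only [Equiv.Perm.coe_pow, nonpos_iff_eq_zero] at hrec hL2 hconv
  obtain ⟨W, -, hW, hWB, hdisj⟩ := exists_wandering_subset hS hB hrec
  have hW_pos : 0 < ν.real W := ENNReal.toReal_pos (hWB ▸ hB_pos.ne') (measure_ne_top ν W)
  refine hdiv (summable_of_summable_sq_mul_of_le_mul (pow_pos hW_pos 3)
    (fun n => measureReal_nonneg)
    (summable_measure_toReal (μ := ν) (fun n => hS.iterate (n + 1) hW)
      (hdisj.comp_of_injective (add_left_injective 1))) (fun n => ?_) hconv)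
  have hSn : Measurable S^[n + 1] := hS.iterate (n + 1)
  have : IsProbabilityMeasure (ν.map S^[n + 1]) :=
    Measure.isProbabilityMeasure_map hSn.aemeasurable
  rw [← map_measureReal_apply hSn hW]
  exact Measure.measureReal_pow_three_le_integral_rnDeriv_sq_mul
    (absolutelyContinuous_map_iterate hS hns.2 (n + 1)) (hL2 _ n.succ_pos) hW

/-- Let `S` be an invertible nonsingular transformation of a standard probability space
`(Y,ν)` such that for each `n ≥ 1` the Radon–Nikodym derivative `dν/d(ν∘S^{-n})` is in
`L²(ν)`; set `b(n) := ‖dν/d(ν∘S^{-n})‖₂²`.  (Here `ν∘S^{-n} = ν.map S^n` is the measure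
`A ↦ ν(S^{-n} A)`.)  If there are positive reals `(a(n))_{n≥1}` with `Σ a(n) = ∞` and
`Σ a(n)² b(n) < ∞` then `S` is conservative. -/
theorem stmt1 {Y : Type*} [MeasurableSpace Y] [StandardBorelSpace Y]
    (ν : Measure Y) [IsProbabilityMeasure ν] (S : Equiv.Perm Y)
    (hS : Measurable ⇑S) (hS' : Measurable ⇑S.symm)
    (hns : ν.map ⇑S ≪ ν ∧ ν ≪ ν.map ⇑S)
    (hL2 : ∀ n : ℕ, 0 < n →
      MemLp (fun y => ((ν.rnDeriv (ν.map ⇑(S ^ n))) y).toReal) 2 ν)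
    (a : ℕ → ℝ) (ha : ∀ n, 0 < a n) (hdiv : ¬ Summable a)
    (hconv : Summable fun n : ℕ =>
      a n ^ 2 * ∫ y, (((ν.rnDeriv (ν.map ⇑(S ^ (n + 1)))) y).toReal) ^ 2 ∂ν) :
    Conservative' S ν :=
  stmt1_general ν S hS hns hL2 a hdiv hconv
end

section
/- For all reals a > 0 and b > 0, the Hellinger affinity of two Poisson distributions satisfies Σ_{k=0}^∞ √( Pois(a)({k}) · Pois(b)({k}) ) = e^{-(√a − √b)²/2}; equivalently, the squared Hellinger distance is H²(Pois(a),Pois(b)) = 1 − e^{-(√a−√b)²/2}. -/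
/-!
The geometric mean of two Poisson weights is again a Poisson weight, up to a constant:
`√(Po(r){n} · Po(s){n}) = e^{-(√r - √s)²/2} · Po(√r √s){n}`,
because `e^{-r} e^{-s} = (e^{-(√r - √s)²/2} e^{-√r √s})²` and `rⁿ sⁿ = ((√r √s)ⁿ)²`.
Summing over `n`, the Poisson weights of rate `√r √s` contribute `1`.
-/

open MeasureTheory ProbabilityTheory

noncomputable def pois (a : ℝ) : Measure ℕ := poissonMeasure a.toNNReal

open Real Nat

lemma Real.sqrt_coe_toNNReal (x : ℝ) : √(x.toNNReal : ℝ) = √x := by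
  rw [← coe_sqrt, Real.sqrt]

lemma exp_neg_mul_exp_neg_eq_sq {x y : ℝ} (hx : 0 ≤ x) (hy : 0 ≤ y) :
    exp (-x) * exp (-y) = (exp (-(√x - √y) ^ 2 / 2) * exp (-(√x * √y))) ^ 2 := by
  rw [← exp_add, ← exp_add, ← exp_nat_mul]
  congr 1
  push_cast
  nlinarith [sq_sqrt hx, sq_sqrt hy]

lemma sqrt_poissonMeasure_real_singleton_mul (r s : NNReal) (n : ℕ) :
    √((poissonMeasure r).real {n} * (poissonMeasure s).real {n}) =
      exp (-(√r - √s) ^ 2 / 2) * (poissonMeasure (NNReal.sqrt r * NNReal.sqrt s)).real {n} := by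
  simp only [poissonMeasure_real_singleton, NNReal.coe_mul, coe_sqrt]
  rw [Real.sqrt_eq_iff_eq_sq (by positivity) (by positivity)]
  calc exp (-r) * r ^ n / n ! * (exp (-s) * s ^ n / n !)
      = (exp (-r) * exp (-s)) * ((√r * √s) ^ 2) ^ n / (n ! ^ 2) := by
        rw [mul_pow, sq_sqrt r.coe_nonneg, sq_sqrt s.coe_nonneg]; ring
    _ = _ := by rw [exp_neg_mul_exp_neg_eq_sq r.coe_nonneg s.coe_nonneg]; ring

lemma hasSum_sqrt_poissonMeasure_real_singleton_mul (r s : NNReal) :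
    HasSum (fun n ↦ √((poissonMeasure r).real {n} * (poissonMeasure s).real {n}))
      (exp (-(√r - √s) ^ 2 / 2)) := by
  simp_rw [sqrt_poissonMeasure_real_singleton_mul, poissonMeasure_real_singleton]
  simpa using (hasSum_one_poissonMeasure (NNReal.sqrt r * NNReal.sqrt s)).mul_left
    (exp (-(√r - √s) ^ 2 / 2))

theorem stmt2_general (a b : ℝ) :
    ∑' k : ℕ, Real.sqrt ((pois a {k}).toReal * (pois b {k}).toReal)
      = Real.exp (-(Real.sqrt a - Real.sqrt b) ^ 2 / 2) := by
  have h := (hasSum_sqrt_poissonMeasure_real_singleton_mul a.toNNReal b.toNNReal).tsum_eq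
  rwa [Real.sqrt_coe_toNNReal, Real.sqrt_coe_toNNReal] at h

/-- Hellinger affinity of two Poisson distributions:
`Σ_k √(Pois(a){k} · Pois(b){k}) = exp(-(√a - √b)²/2)`; equivalently the squared Hellinger
distance is `H²(Pois(a),Pois(b)) = 1 - exp(-(√a-√b)²/2)`. -/
theorem stmt2 (a b : ℝ) (ha : 0 < a) (hb : 0 < b) :
    ∑' k : ℕ, Real.sqrt ((pois a {k}).toReal * (pois b {k}).toReal)
      = Real.exp (-(Real.sqrt a - Real.sqrt b) ^ 2 / 2) :=
  stmt2_general a b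
end

section
/- Let (a_n)_{n∈ℤ} be positive reals. The two product probability measures ⊗_{n∈ℤ} Pois(a_{n-1}) and η = ⊗_{n∈ℤ} Pois(a_n) on ℕ^ℤ are mutually absolutely continuous (equivalently, the shift σ is η-nonsingular, since the pushforward of η under σ^{-1} is ⊗_{n∈ℤ} Pois(a_{n-1})) if and only if Σ_{n∈ℤ} (√(a_{n-1}) − √(a_n))² < ∞. -/
open MeasureTheory ProbabilityTheory

/-- `IsProductOf η μ` says that `η` is the infinite product `⊗_{i} μ i` of the probability
measures `μ i`, i.e. `η` gives each cylinder set the corresponding product value. -/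
def IsProductOf {ι : Type*} [MeasurableSpace ι] (η : Measure (ι → ℕ)) (μ : ι → Measure ℕ) : Prop :=
  ∀ (F : Finset ι) (v : ι → ℕ), η {y | ∀ i ∈ F, y i = v i} = ∏ i ∈ F, μ i {v i}

/-!
For probability measures `μ i`, `ν i` on `ℕ` charging every point, let
`exp (-r i) = ∑ₖ √(μ i {k} * ν i {k})` be their Hellinger affinity and `ℓ_F = ∏_{i ∈ F} dν i / dμ i`
the likelihood ratio of a finite block `F` of coordinates; then `∫ √ℓ_F d(⊗ μ) = exp (-∑_F r)`.

If `∑ r i = ∞`, choose blocks `F_j` with `∑_{F_j} r ≥ j`. By Chebyshev, `{1 ≤ ℓ_{F_j}}` has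
`⊗ μ`-measure at most `e^{-j}`; the likelihood ratio of `μ` to `ν` is `1 / ℓ_{F_j}`, so the
complement has `⊗ ν`-measure at most `e^{-j}`, and Borel–Cantelli makes `⊗ μ` and `⊗ ν` mutually
singular (Kakutani).

If `∑ r i < ∞`, write `ℓ_G = ℓ_F W²` with `W = √ℓ_{G \ F}`; since `∫ ℓ_F W = exp (-∑_{G \ F} r)`,
the net `(ℓ_F)` is Cauchy in `L¹(⊗ μ)`. Its limit has the same integrals as `⊗ ν` over cylinders,
so it is a density of `⊗ ν`.

For Poisson laws the affinity is `exp (-(√c - √d)² / 2)`.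
-/

open Filter Set
open scoped ENNReal

section PointCylinder

variable {ι : Type*}

def pointCylinder (F : Finset ι) (v : ι → ℕ) : Set (ι → ℕ) := {y | ∀ i ∈ F, y i = v i}

@[simp]
lemma pointCylinder_empty (v : ι → ℕ) : pointCylinder ∅ v = univ := by
  simp [pointCylinder]

lemma measurableSet_pointCylinder (F : Finset ι) (v : ι → ℕ) :
    MeasurableSet (pointCylinder F v) := by
  have : pointCylinder F v = ⋂ i ∈ F, (fun y : ι → ℕ => y i) ⁻¹' {v i} := by
    ext y; simp [pointCylinder]
  rw [this]
  exact F.measurableSet_biInter fun i _ => measurable_pi_apply i (measurableSet_singleton _)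

lemma isPiSystem_pointCylinders : IsPiSystem {s | ∃ F v, s = pointCylinder (ι := ι) F v} := by
  classical
  rintro _ ⟨F, v, rfl⟩ _ ⟨G, w, rfl⟩ ⟨z, hzv, hzw⟩
  refine ⟨F ∪ G, fun i => if i ∈ F then v i else w i, ?_⟩
  ext y
  simp only [pointCylinder, mem_inter_iff, mem_ofPred_eq, Finset.mem_union]
  constructor
  · rintro ⟨hv, hw⟩ i hi
    split_ifs with hiF
    exacts [hv i hiF, hw i (hi.resolve_left hiF)]
  · intro hy
    refine ⟨fun i hi => by simpa [hi] using hy i (.inl hi), fun i hi => ?_⟩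
    by_cases hiF : i ∈ F
    · rw [← hzw i hi, hzv i hiF]; simpa [hiF] using hy i (.inl hiF)
    · simpa [hiF] using hy i (.inr hi)

lemma pi_eq_generateFrom_pointCylinders :
    MeasurableSpace.pi =
      MeasurableSpace.generateFrom {s | ∃ F v, s = pointCylinder (ι := ι) F v} := by
  refine le_antisymm (iSup_le fun i => ?_) ?_
  · rintro _ ⟨t, -, rfl⟩
    have : (fun y : ι → ℕ => y i) ⁻¹' t = ⋃ k ∈ t, pointCylinder {i} fun _ => k := by
      ext y; simp [pointCylinder]
    rw [this]
    exact .biUnion t.to_countable fun k _ => .basic _ ⟨_, _, rfl⟩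
  · rw [MeasurableSpace.generateFrom_le_iff]
    rintro _ ⟨F, v, rfl⟩
    exact measurableSet_pointCylinder F v

lemma ext_of_pointCylinder {η η' : Measure (ι → ℕ)} [IsFiniteMeasure η]
    (h : ∀ F v, η (pointCylinder F v) = η' (pointCylinder F v)) : η = η' :=
  ext_of_generate_finite _ pi_eq_generateFrom_pointCylinders isPiSystem_pointCylinders
    (by rintro _ ⟨F, v, rfl⟩; exact h F v) (by simpa using h ∅ 0)

lemma infinitePi_pointCylinder (μ : ι → Measure ℕ) [∀ i, IsProbabilityMeasure (μ i)]
    (F : Finset ι) (v : ι → ℕ) :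
    Measure.infinitePi μ (pointCylinder F v) = ∏ i ∈ F, μ i {v i} := by
  have : pointCylinder F v = (F : Set ι).pi fun i => {v i} := by
    ext y; simp [pointCylinder]
  rw [this, Measure.infinitePi_pi μ fun i _ => measurableSet_singleton _]

lemma IsProductOf.eq_infinitePi [MeasurableSpace ι] {η : Measure (ι → ℕ)} {μ : ι → Measure ℕ}
    [∀ i, IsProbabilityMeasure (μ i)] (hη : IsProductOf η μ) : η = Measure.infinitePi μ :=
  (ext_of_pointCylinder fun F v => (infinitePi_pointCylinder μ F v).trans (hη F v).symm).symm

end PointCylinder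

section ProductIntegrals

variable {ι : Type*} {μ : ι → Measure ℕ} [∀ i, IsProbabilityMeasure (μ i)]

lemma lintegral_infinitePi_finsetProd (F : Finset ι) (h : ι → ℕ → ℝ≥0∞) :
    ∫⁻ y, ∏ i ∈ F, h i (y i) ∂Measure.infinitePi μ = ∏ i ∈ F, ∑' k, h i k * μ i {k} := by
  refine (lintegral_prod_eq_prod_lintegral_of_indepFun F (fun i (y : ι → ℕ) => h i (y i))
    (iIndepFun_infinitePi fun i => .of_discrete) fun i => Measurable.of_discrete.comp
      (measurable_pi_apply i)).trans ?_
  refine Finset.prod_congr rfl fun i _ => ?_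
  rw [← lintegral_countable', ← Measure.infinitePi_map_eval μ i,
    lintegral_map .of_discrete (measurable_pi_apply i)]

variable {F : Finset ι} {h : ι → ℕ → ℝ} {c : ι → ℝ}

lemma lintegral_ofReal_infinitePi_finsetProd (h0 : ∀ i k, 0 ≤ h i k)
    (hc : ∀ i ∈ F, HasSum (fun k => h i k * (μ i).real {k}) (c i)) :
    ∫⁻ y, ENNReal.ofReal (∏ i ∈ F, h i (y i)) ∂Measure.infinitePi μ =
      ENNReal.ofReal (∏ i ∈ F, c i) := by
  have hc0 : ∀ i ∈ F, 0 ≤ c i := fun i hi =>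
    (hc i hi).nonneg fun k => mul_nonneg (h0 i k) measureReal_nonneg
  simp_rw [ENNReal.ofReal_prod_of_nonneg fun i _ => h0 i _]
  rw [lintegral_infinitePi_finsetProd F fun i k => ENNReal.ofReal (h i k),
    ENNReal.ofReal_prod_of_nonneg hc0]
  refine Finset.prod_congr rfl fun i hi => ?_
  rw [← (hc i hi).tsum_eq, ENNReal.ofReal_tsum_of_nonneg
    (fun k => mul_nonneg (h0 i k) measureReal_nonneg) (hc i hi).summable]
  exact tsum_congr fun k => by rw [ENNReal.ofReal_mul (h0 i k), ofReal_measureReal]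

lemma integrable_infinitePi_finsetProd (h0 : ∀ i k, 0 ≤ h i k)
    (hc : ∀ i ∈ F, HasSum (fun k => h i k * (μ i).real {k}) (c i)) :
    Integrable (fun y => ∏ i ∈ F, h i (y i)) (Measure.infinitePi μ) := by
  refine ⟨(Finset.measurable_prod F fun i _ =>
    Measurable.of_discrete.comp (measurable_pi_apply i)).aestronglyMeasurable, ?_⟩
  rw [hasFiniteIntegral_iff_ofReal (ae_of_all _ fun y => Finset.prod_nonneg fun i _ => h0 i _),
    lintegral_ofReal_infinitePi_finsetProd h0 hc]
  exact ENNReal.ofReal_lt_top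

lemma integral_infinitePi_finsetProd (h0 : ∀ i k, 0 ≤ h i k)
    (hc : ∀ i ∈ F, HasSum (fun k => h i k * (μ i).real {k}) (c i)) :
    ∫ y, ∏ i ∈ F, h i (y i) ∂Measure.infinitePi μ = ∏ i ∈ F, c i := by
  have hc0 : ∀ i ∈ F, 0 ≤ c i := fun i hi =>
    (hc i hi).nonneg fun k => mul_nonneg (h0 i k) measureReal_nonneg
  rw [integral_eq_lintegral_of_nonneg_ae
      (ae_of_all _ fun y => Finset.prod_nonneg fun i _ => h0 i _)
      (integrable_infinitePi_finsetProd h0 hc).aestronglyMeasurable,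
    lintegral_ofReal_infinitePi_finsetProd h0 hc, ENNReal.toReal_ofReal (Finset.prod_nonneg hc0)]

end ProductIntegrals

-- AM–GM with a free weight `t`; integrated, it replaces Cauchy–Schwarz.
lemma abs_mul_sq_sub_le {t u w : ℝ} (ht : 0 < t) (hu : 0 ≤ u) (hw : 0 ≤ w) :
    |u * w ^ 2 - u| ≤ (t * (u * (w + 1) ^ 2) + u * (w - 1) ^ 2 / t) / 2 := by
  have habs : |u * w ^ 2 - u| = u * (|w - 1| * (w + 1)) := by
    rw [show u * w ^ 2 - u = u * ((w - 1) * (w + 1)) by ring, abs_mul, abs_mul, abs_of_nonneg hu,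
      abs_of_nonneg (by linarith : 0 ≤ w + 1)]
  have hrhs : (t * (u * (w + 1) ^ 2) + u * (w - 1) ^ 2 / t) / 2 =
      (t ^ 2 * (u * (w + 1) ^ 2) + u * (w - 1) ^ 2) / (2 * t) := by
    field_simp
  rw [habs, hrhs, le_div_iff₀ (by positivity)]
  nlinarith [mul_nonneg hu (sq_nonneg (t * (w + 1) - |w - 1|)), sq_abs (w - 1)]

section MassRatio

variable {μ ν : Measure ℕ}

lemma hasSum_measureReal_singleton [IsProbabilityMeasure μ] : HasSum (fun k => μ.real {k}) 1 := by
  have hsum : ∑' k, μ {k} = 1 := by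
    simpa using (lintegral_countable' (μ := μ) 1).symm
  have := ENNReal.hasSum_toReal (f := fun k => μ {k}) (by rw [hsum]; exact ENNReal.one_ne_top)
  rwa [← ENNReal.tsum_toReal_eq fun k => measure_ne_top μ {k}, hsum, ENNReal.toReal_one] at this

lemma nonneg_of_hasSum_sqrt_mul [IsProbabilityMeasure μ] [IsProbabilityMeasure ν] {r : ℝ}
    (hH : HasSum (fun k => √(μ.real {k} * ν.real {k})) (Real.exp (-r))) : 0 ≤ r := by
  have hmean := ((hasSum_measureReal_singleton (μ := μ)).add
    (hasSum_measureReal_singleton (μ := ν))).div_const 2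
  have hle : Real.exp (-r) ≤ (1 + 1) / 2 := hasSum_le (fun k => by
    rw [Real.sqrt_mul measureReal_nonneg]
    nlinarith [sq_nonneg (√(μ.real {k}) - √(ν.real {k})),
      Real.sq_sqrt (measureReal_nonneg (μ := μ) (s := {k})),
      Real.sq_sqrt (measureReal_nonneg (μ := ν) (s := {k}))]) hH hmean
  norm_num at hle
  exact hle

noncomputable def massRatio (μ ν : Measure ℕ) (k : ℕ) : ℝ := ν.real {k} / μ.real {k}

lemma massRatio_nonneg (k : ℕ) : 0 ≤ massRatio μ ν k :=
  div_nonneg measureReal_nonneg measureReal_nonneg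

variable (hμ : ∀ k, 0 < μ.real {k})
include hμ

lemma massRatio_mul_measureReal (k : ℕ) : massRatio μ ν k * μ.real {k} = ν.real {k} :=
  div_mul_cancel₀ _ (hμ k).ne'

lemma hasSum_massRatio_mul [IsProbabilityMeasure ν] :
    HasSum (fun k => massRatio μ ν k * μ.real {k}) 1 := by
  simpa only [massRatio_mul_measureReal hμ] using hasSum_measureReal_singleton

lemma hasSum_sqrt_massRatio_mul {A : ℝ} (hH : HasSum (fun k => √(μ.real {k} * ν.real {k})) A) :
    HasSum (fun k => √(massRatio μ ν k) * μ.real {k}) A := by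
  convert hH using 2 with k
  rw [← massRatio_mul_measureReal (ν := ν) hμ k,
    show μ.real {k} * (massRatio μ ν k * μ.real {k}) = massRatio μ ν k * μ.real {k} ^ 2 by ring,
    Real.sqrt_mul (massRatio_nonneg k), Real.sqrt_sq measureReal_nonneg]

lemma hasSum_ite_massRatio_mul (v : ℕ) :
    HasSum (fun k => (if k = v then massRatio μ ν k else 0) * μ.real {k}) (ν.real {v}) := by
  convert hasSum_ite_eq v (ν.real {v}) using 2 with k
  split_ifs with hk
  · rw [hk, massRatio_mul_measureReal hμ]
  · rw [zero_mul]

lemma massRatio_mul_massRatio (hν : ∀ k, 0 < ν.real {k}) (k : ℕ) :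
    massRatio μ ν k * massRatio ν μ k = 1 := by
  rw [massRatio, massRatio, div_mul_div_comm, mul_comm, div_self (mul_pos (hμ k) (hν k)).ne']

end MassRatio

section LikelihoodRatio

variable {ι : Type*} {μ ν : ι → Measure ℕ} {F G : Finset ι}

noncomputable def likelihoodRatio (μ ν : ι → Measure ℕ) (F : Finset ι) (y : ι → ℕ) : ℝ :=
  ∏ i ∈ F, massRatio (μ i) (ν i) (y i)

lemma likelihoodRatio_nonneg (y : ι → ℕ) : 0 ≤ likelihoodRatio μ ν F y :=
  Finset.prod_nonneg fun _ _ => massRatio_nonneg _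

lemma measurable_likelihoodRatio (F : Finset ι) : Measurable (likelihoodRatio μ ν F) :=
  Finset.measurable_prod F fun i _ =>
    (Measurable.of_discrete (f := massRatio (μ i) (ν i))).comp (measurable_pi_apply i)

lemma likelihoodRatio_union [DecidableEq ι] (hFG : Disjoint F G) (y : ι → ℕ) :
    likelihoodRatio μ ν (F ∪ G) y = likelihoodRatio μ ν F y * likelihoodRatio μ ν G y :=
  Finset.prod_union hFG

lemma likelihoodRatio_mul_likelihoodRatio (hμ : ∀ i k, 0 < (μ i).real {k})
    (hν : ∀ i k, 0 < (ν i).real {k}) (y : ι → ℕ) :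
    likelihoodRatio μ ν F y * likelihoodRatio ν μ F y = 1 := by
  rw [likelihoodRatio, likelihoodRatio, ← Finset.prod_mul_distrib]
  exact Finset.prod_eq_one fun i _ => massRatio_mul_massRatio (hμ i) (hν i) (y i)

lemma likelihoodRatio_mul_sqrt_eq_prod [DecidableEq ι] (hFG : Disjoint F G) (y : ι → ℕ) :
    likelihoodRatio μ ν F y * √(likelihoodRatio μ ν G y) = ∏ i ∈ F ∪ G,
      if i ∈ F then massRatio (μ i) (ν i) (y i) else √(massRatio (μ i) (ν i) (y i)) := by
  rw [Finset.prod_union hFG, likelihoodRatio, likelihoodRatio,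
    Real.sqrt_prod _ fun _ _ => massRatio_nonneg _]
  congr 1
  · exact Finset.prod_congr rfl fun i hi => (if_pos hi).symm
  · exact Finset.prod_congr rfl fun i hi => (if_neg (Finset.disjoint_right.1 hFG hi)).symm

lemma abs_likelihoodRatio_sub_le [DecidableEq ι] (hFG : F ⊆ G) {t : ℝ} (ht : 0 < t) (y : ι → ℕ) :
    |likelihoodRatio μ ν G y - likelihoodRatio μ ν F y| ≤
      ((t + t⁻¹) * (likelihoodRatio μ ν G y + likelihoodRatio μ ν F y) +
        (t - t⁻¹) * (2 * (likelihoodRatio μ ν F y * √(likelihoodRatio μ ν (G \ F) y)))) / 2 := by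
  have hG : likelihoodRatio μ ν G y =
      likelihoodRatio μ ν F y * √(likelihoodRatio μ ν (G \ F) y) ^ 2 := by
    rw [Real.sq_sqrt (likelihoodRatio_nonneg y), ← likelihoodRatio_union Finset.disjoint_sdiff,
      Finset.union_sdiff_of_subset hFG]
  rw [hG]
  convert abs_mul_sq_sub_le ht (likelihoodRatio_nonneg y) (Real.sqrt_nonneg _) using 1
  field_simp
  ring

variable [∀ i, IsProbabilityMeasure (μ i)] (hμ : ∀ i k, 0 < (μ i).real {k})
include hμ

lemma lintegral_sqrt_likelihoodRatio {r : ι → ℝ}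
    (hH : ∀ i, HasSum (fun k => √((μ i).real {k} * (ν i).real {k})) (Real.exp (-r i)))
    (F : Finset ι) :
    ∫⁻ y, ENNReal.ofReal √(likelihoodRatio μ ν F y) ∂Measure.infinitePi μ =
      ENNReal.ofReal (Real.exp (-∑ i ∈ F, r i)) := by
  simp_rw [likelihoodRatio, Real.sqrt_prod _ fun _ _ => massRatio_nonneg _]
  rw [lintegral_ofReal_infinitePi_finsetProd (fun _ _ => Real.sqrt_nonneg _)
    fun i _ => hasSum_sqrt_massRatio_mul (hμ i) (hH i), ← Real.exp_sum, Finset.sum_neg_distrib]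

variable [∀ i, IsProbabilityMeasure (ν i)]

lemma integrable_likelihoodRatio (F : Finset ι) :
    Integrable (likelihoodRatio μ ν F) (Measure.infinitePi μ) :=
  integrable_infinitePi_finsetProd (fun _ _ => massRatio_nonneg _)
    (c := 1) fun i _ => hasSum_massRatio_mul (hμ i)

lemma integral_likelihoodRatio (F : Finset ι) :
    ∫ y, likelihoodRatio μ ν F y ∂Measure.infinitePi μ = 1 := by
  simpa [likelihoodRatio] using integral_infinitePi_finsetProd (fun _ _ => massRatio_nonneg _)
    (c := 1) fun i _ => hasSum_massRatio_mul (μ := μ i) (ν := ν i) (hμ i)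

lemma setIntegral_likelihoodRatio_pointCylinder {E : Finset ι} (hEF : E ⊆ F)
    (v : ι → ℕ) :
    ∫ y in pointCylinder E v, likelihoodRatio μ ν F y ∂Measure.infinitePi μ =
      (Measure.infinitePi ν).real (pointCylinder E v) := by
  classical
  have hind : (pointCylinder E v).indicator (likelihoodRatio μ ν F) = fun y => ∏ i ∈ F,
      if i ∈ E then (if y i = v i then massRatio (μ i) (ν i) (y i) else 0)
      else massRatio (μ i) (ν i) (y i) := by
    funext y
    by_cases hy : y ∈ pointCylinder E v
    · rw [indicator_of_mem hy]
      exact Finset.prod_congr rfl fun i _ => by split_ifs with hiE <;> simp_all [pointCylinder]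
    · rw [indicator_of_notMem hy]
      obtain ⟨i, hiE, hne⟩ : ∃ i ∈ E, y i ≠ v i := by simpa [pointCylinder] using hy
      exact (Finset.prod_eq_zero (hEF hiE) (by simp [hiE, hne])).symm
  rw [← integral_indicator (measurableSet_pointCylinder E v), hind,
    integral_infinitePi_finsetProd (c := fun i => if i ∈ E then (ν i).real {v i} else 1)
      (h := fun i k => if i ∈ E then (if k = v i then massRatio (μ i) (ν i) k else 0)
        else massRatio (μ i) (ν i) k)]
  · rw [measureReal_def, infinitePi_pointCylinder, ENNReal.toReal_prod, ← Finset.prod_subset hEF]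
    · exact Finset.prod_congr rfl fun i hi => by simp [hi, measureReal_def]
    · intro i _ hiE; simp [hiE]
  · intro i k; split_ifs <;> first | exact massRatio_nonneg _ | exact le_rfl
  · intro i _
    split_ifs
    · exact hasSum_ite_massRatio_mul (hμ i) (v i)
    · exact hasSum_massRatio_mul (hμ i)

section Hellinger

variable {r : ι → ℝ}
  (hH : ∀ i, HasSum (fun k => √((μ i).real {k} * (ν i).real {k})) (Real.exp (-r i)))
  (hFG : Disjoint F G)
include hH hFG

lemma integrable_likelihoodRatio_mul_sqrt :
    Integrable (fun y => likelihoodRatio μ ν F y * √(likelihoodRatio μ ν G y))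
      (Measure.infinitePi μ) := by
  classical
  simp_rw [likelihoodRatio_mul_sqrt_eq_prod hFG]
  refine integrable_infinitePi_finsetProd
    (h := fun i k => if i ∈ F then massRatio (μ i) (ν i) k else √(massRatio (μ i) (ν i) k))
    (fun i k => by split_ifs; exacts [massRatio_nonneg _, Real.sqrt_nonneg _])
    (c := fun i => if i ∈ F then 1 else Real.exp (-r i)) fun i _ => ?_
  split_ifs
  exacts [hasSum_massRatio_mul (hμ i), hasSum_sqrt_massRatio_mul (hμ i) (hH i)]

lemma integral_likelihoodRatio_mul_sqrt :
    ∫ y, likelihoodRatio μ ν F y * √(likelihoodRatio μ ν G y) ∂Measure.infinitePi μ =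
      Real.exp (-∑ i ∈ G, r i) := by
  classical
  simp_rw [likelihoodRatio_mul_sqrt_eq_prod hFG]
  rw [integral_infinitePi_finsetProd
    (h := fun i k => if i ∈ F then massRatio (μ i) (ν i) k else √(massRatio (μ i) (ν i) k))
    (fun i k => by split_ifs; exacts [massRatio_nonneg _, Real.sqrt_nonneg _])
    (c := fun i => if i ∈ F then 1 else Real.exp (-r i)) fun i _ => ?_]
  · rw [Finset.prod_union hFG, Finset.prod_congr rfl fun i hi => if_pos hi, Finset.prod_const_one,
      one_mul, Finset.prod_congr rfl fun i hi => if_neg (Finset.disjoint_right.1 hFG hi),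
      ← Real.exp_sum, Finset.sum_neg_distrib]
  split_ifs
  exacts [hasSum_massRatio_mul (hμ i), hasSum_sqrt_massRatio_mul (hμ i) (hH i)]

end Hellinger

end LikelihoodRatio

lemma MeasureTheory.Measure.mutuallySingular_of_tsum_ne_top {Ω : Type*} [MeasurableSpace Ω]
    {μ ν : Measure Ω} (s : ℕ → Set Ω) (hμ : ∑' j, μ (s j) ≠ ∞) (hν : ∑' j, ν (s j)ᶜ ≠ ∞) :
    μ ⟂ₘ ν :=
  .mk (measure_limsup_atTop_eq_zero hμ) (measure_limsup_atTop_eq_zero hν) fun y _ => by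
    simpa only [mem_union, mem_limsup_iff_frequently_mem, mem_compl_iff] using
      frequently_or_distrib.1 (.of_forall fun j => em (y ∈ s j))

section Singular

variable {ι : Type*} {μ ν : ι → Measure ℕ} [∀ i, IsProbabilityMeasure (μ i)] {r : ι → ℝ}

lemma infinitePi_setOf_one_le_likelihoodRatio_le (hμ : ∀ i k, 0 < (μ i).real {k})
    (hH : ∀ i, HasSum (fun k => √((μ i).real {k} * (ν i).real {k})) (Real.exp (-r i)))
    (F : Finset ι) :
    Measure.infinitePi μ {y | 1 ≤ likelihoodRatio μ ν F y} ≤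
      ENNReal.ofReal (Real.exp (-∑ i ∈ F, r i)) := by
  calc Measure.infinitePi μ {y | 1 ≤ likelihoodRatio μ ν F y}
      ≤ Measure.infinitePi μ {y | 1 ≤ ENNReal.ofReal √(likelihoodRatio μ ν F y)} :=
        measure_mono fun y hy => by simpa using Real.one_le_sqrt.2 hy
    _ ≤ ∫⁻ y, ENNReal.ofReal √(likelihoodRatio μ ν F y) ∂Measure.infinitePi μ := by
        simpa using mul_meas_ge_le_lintegral₀
          (measurable_likelihoodRatio F).sqrt.ennreal_ofReal.aemeasurable 1
    _ = _ := lintegral_sqrt_likelihoodRatio hμ hH F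

variable [∀ i, IsProbabilityMeasure (ν i)]

theorem mutuallySingular_infinitePi_of_not_summable (hμ : ∀ i k, 0 < (μ i).real {k})
    (hν : ∀ i k, 0 < (ν i).real {k})
    (hH : ∀ i, HasSum (fun k => √((μ i).real {k} * (ν i).real {k})) (Real.exp (-r i)))
    (hr : ¬Summable r) :
    Measure.infinitePi μ ⟂ₘ Measure.infinitePi ν := by
  have hH' : ∀ i, HasSum (fun k => √((ν i).real {k} * (μ i).real {k})) (Real.exp (-r i)) := by
    simpa only [mul_comm] using hH
  have hlarge : ∀ j : ℕ, ∃ F : Finset ι, (j : ℝ) ≤ ∑ i ∈ F, r i := by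
    by_contra! h
    obtain ⟨j, hj⟩ := h
    exact hr (summable_of_sum_le (fun i => nonneg_of_hasSum_sqrt_mul (hH i)) fun F => (hj F).le)
  choose F hF using hlarge
  have hexp : ∀ j, ENNReal.ofReal (Real.exp (-∑ i ∈ F j, r i)) ≤ ENNReal.ofReal (Real.exp (-j)) :=
    fun j => ENNReal.ofReal_le_ofReal (Real.exp_le_exp.2 (neg_le_neg (hF j)))
  have hgeom : ∑' j : ℕ, ENNReal.ofReal (Real.exp (-j)) ≠ ∞ := by
    rw [← ENNReal.ofReal_tsum_of_nonneg (fun j => (Real.exp_pos _).le) Real.summable_exp_neg_nat]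
    exact ENNReal.ofReal_ne_top
  refine Measure.mutuallySingular_of_tsum_ne_top (fun j => {y | 1 ≤ likelihoodRatio μ ν (F j) y})
    (ne_top_of_le_ne_top hgeom (ENNReal.tsum_le_tsum fun j =>
      (infinitePi_setOf_one_le_likelihoodRatio_le hμ hH (F j)).trans (hexp j)))
    (ne_top_of_le_ne_top hgeom (ENNReal.tsum_le_tsum fun j =>
      (measure_mono fun y hy => ?_).trans
        ((infinitePi_setOf_one_le_likelihoodRatio_le hν hH' (F j)).trans (hexp j))))
  have hprod := likelihoodRatio_mul_likelihoodRatio hμ hν (F := F j) y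
  have hlt : likelihoodRatio μ ν (F j) y < 1 := not_le.1 hy
  show 1 ≤ likelihoodRatio ν μ (F j) y
  nlinarith [likelihoodRatio_nonneg (μ := μ) (ν := ν) (F := F j) y,
    likelihoodRatio_nonneg (μ := ν) (ν := μ) (F := F j) y]

end Singular

lemma MeasureTheory.Integrable.dist_toL1 {Ω : Type*} [MeasurableSpace Ω] {η : Measure Ω}
    {f g : Ω → ℝ} (hf : Integrable f η) (hg : Integrable g η) :
    dist (hf.toL1 f) (hg.toL1 g) = ∫ y, |f y - g y| ∂η := by
  rw [L1.dist_eq_integral_dist]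
  refine integral_congr_ae ?_
  filter_upwards [hf.coeFn_toL1, hg.coeFn_toL1] with y hfy hgy
  rw [hfy, hgy, Real.dist_eq]

lemma eq_withDensity_of_setIntegral_pointCylinder {ι : Type*} {η η' : Measure (ι → ℕ)}
    [IsFiniteMeasure η'] {f : (ι → ℕ) → ℝ} (hf : Integrable f η) (hf0 : 0 ≤ᵐ[η] f)
    (h : ∀ E v, ∫ y in pointCylinder E v, f y ∂η = η'.real (pointCylinder E v)) :
    η' = η.withDensity fun y => ENNReal.ofReal (f y) :=
  ext_of_pointCylinder fun E v => by
    rw [withDensity_apply _ (measurableSet_pointCylinder E v),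
      ← ofReal_integral_eq_lintegral_ofReal hf.integrableOn (ae_restrict_of_ae hf0), h,
      ofReal_measureReal]

section AbsolutelyContinuous

variable {ι : Type*} {μ ν : ι → Measure ℕ} [∀ i, IsProbabilityMeasure (μ i)]
  [∀ i, IsProbabilityMeasure (ν i)] {r : ι → ℝ} (hμ : ∀ i k, 0 < (μ i).real {k})
  (hH : ∀ i, HasSum (fun k => √((μ i).real {k} * (ν i).real {k})) (Real.exp (-r i)))
include hμ hH

lemma integral_abs_likelihoodRatio_sub_le [DecidableEq ι] {F G : Finset ι} (hFG : F ⊆ G) {t : ℝ}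
    (ht : 0 < t) :
    ∫ y, |likelihoodRatio μ ν G y - likelihoodRatio μ ν F y| ∂Measure.infinitePi μ ≤
      2 * t + (∑ i ∈ G \ F, r i) / t := by
  have hdisj : Disjoint F (G \ F) := Finset.disjoint_sdiff
  have iG := integrable_likelihoodRatio (ν := ν) hμ G
  have iF := integrable_likelihoodRatio (ν := ν) hμ F
  have iW := integrable_likelihoodRatio_mul_sqrt hμ hH hdisj
  set P := Real.exp (-∑ i ∈ G \ F, r i)
  have hP1 : P ≤ 1 := Real.exp_le_one_iff.2 (neg_nonpos.2
    (Finset.sum_nonneg fun i _ => nonneg_of_hasSum_sqrt_mul (hH i)))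
  have hP : 1 - P ≤ ∑ i ∈ G \ F, r i := by
    linarith [Real.one_sub_le_exp_neg (∑ i ∈ G \ F, r i)]
  calc ∫ y, |likelihoodRatio μ ν G y - likelihoodRatio μ ν F y| ∂Measure.infinitePi μ
      ≤ ∫ y, ((t + t⁻¹) * (likelihoodRatio μ ν G y + likelihoodRatio μ ν F y) +
          (t - t⁻¹) * (2 * (likelihoodRatio μ ν F y * √(likelihoodRatio μ ν (G \ F) y)))) / 2
          ∂Measure.infinitePi μ :=
        integral_mono (iG.sub iF).abs
          (((iG.add iF).const_mul _).add ((iW.const_mul 2).const_mul _) |>.div_const 2)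
          (abs_likelihoodRatio_sub_le hFG ht)
    _ = t * (1 + P) + (1 - P) / t := by
        rw [integral_div, integral_add (f := fun y => (t + t⁻¹) *
            (likelihoodRatio μ ν G y + likelihoodRatio μ ν F y)) ((iG.add iF).const_mul _)
            ((iW.const_mul 2).const_mul _),
          integral_const_mul, integral_const_mul, integral_const_mul, integral_add iG iF,
          integral_likelihoodRatio hμ, integral_likelihoodRatio hμ,
          integral_likelihoodRatio_mul_sqrt hμ hH hdisj]
        field_simp
        ring
    _ ≤ 2 * t + (∑ i ∈ G \ F, r i) / t :=
        add_le_add (by nlinarith) (div_le_div_of_nonneg_right hP ht.le)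

lemma cauchySeq_likelihoodRatio_toL1 (hr : Summable r) :
    CauchySeq fun F : Finset ι => (integrable_likelihoodRatio (ν := ν) hμ F).toL1 _ := by
  classical
  rw [Metric.cauchySeq_iff']
  intro ε hε
  obtain ⟨s, hs⟩ := hr.vanishing (Iio_mem_nhds (show 0 < ε ^ 2 / 16 by positivity))
  refine ⟨s, fun F hsF => ?_⟩
  have htail : ∑ i ∈ F \ s, r i < ε ^ 2 / 16 := hs _ Finset.sdiff_disjoint
  rw [Integrable.dist_toL1]
  calc ∫ y, |likelihoodRatio μ ν F y - likelihoodRatio μ ν s y| ∂Measure.infinitePi μ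
      ≤ 2 * (ε / 4) + (∑ i ∈ F \ s, r i) / (ε / 4) :=
        integral_abs_likelihoodRatio_sub_le hμ hH hsF (by positivity)
    _ < ε := by
        have : (∑ i ∈ F \ s, r i) / (ε / 4) < ε / 2 := by
          rw [div_lt_iff₀ (by positivity)]
          nlinarith
        linarith

theorem absolutelyContinuous_infinitePi_of_summable (hr : Summable r) :
    Measure.infinitePi ν ≪ Measure.infinitePi μ := by
  obtain ⟨Λ, hΛ⟩ := cauchySeq_tendsto_of_complete (cauchySeq_likelihoodRatio_toL1 hμ hH hr)
  have hΛ0 : 0 ≤ᵐ[Measure.infinitePi μ] Λ := by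
    refine (Lp.coeFn_nonneg Λ).2 (ge_of_tendsto hΛ (Eventually.of_forall fun F => ?_))
    rw [← Lp.coeFn_nonneg]
    filter_upwards [Integrable.coeFn_toL1 (integrable_likelihoodRatio (ν := ν) hμ F)] with y hy
    rw [Pi.zero_apply, hy]
    exact likelihoodRatio_nonneg y
  have hcyl : ∀ E v, ∫ y in pointCylinder E v, Λ y ∂Measure.infinitePi μ =
      (Measure.infinitePi ν).real (pointCylinder E v) := fun E v => by
    refine tendsto_nhds_unique (((continuous_setIntegral _).tendsto Λ).comp hΛ)
      (tendsto_const_nhds.congr' ?_)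
    filter_upwards [eventually_ge_atTop E] with F hEF
    rw [Function.comp_apply, ← setIntegral_likelihoodRatio_pointCylinder hμ hEF v]
    exact (integral_congr_ae (ae_restrict_of_ae (Integrable.coeFn_toL1 _))).symm
  rw [eq_withDensity_of_setIntegral_pointCylinder (L1.integrable_coeFn Λ) hΛ0 hcyl]
  exact withDensity_absolutelyContinuous _ _

end AbsolutelyContinuous

theorem absolutelyContinuous_infinitePi_iff {ι : Type*} {μ ν : ι → Measure ℕ}
    [∀ i, IsProbabilityMeasure (μ i)] [∀ i, IsProbabilityMeasure (ν i)] {r : ι → ℝ}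
    (hμ : ∀ i k, 0 < (μ i).real {k}) (hν : ∀ i k, 0 < (ν i).real {k})
    (hH : ∀ i, HasSum (fun k => √((μ i).real {k} * (ν i).real {k})) (Real.exp (-r i))) :
    Measure.infinitePi ν ≪ Measure.infinitePi μ ↔ Summable r := by
  refine ⟨fun hac => ?_, absolutelyContinuous_infinitePi_of_summable hμ hH⟩
  by_contra hr
  exact IsProbabilityMeasure.ne_zero _ (Measure.eq_zero_of_absolutelyContinuous_of_mutuallySingular
    hac (mutuallySingular_infinitePi_of_not_summable hμ hν hH hr).symm)

section Poisson

instance (a : ℝ) : IsProbabilityMeasure (pois a) := by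
  unfold pois; infer_instance

lemma pois_real_singleton {a : ℝ} (ha : 0 ≤ a) (k : ℕ) :
    (pois a).real {k} = Real.exp (-a) * a ^ k / k.factorial := by
  rw [pois, poissonMeasure_real_singleton, Real.coe_toNNReal a ha]

lemma pois_real_singleton_pos {a : ℝ} (ha : 0 < a) (k : ℕ) : 0 < (pois a).real {k} :=
  poissonMeasure_real_singleton_pos k (Real.toNNReal_pos.2 ha)

lemma hasSum_sqrt_pois_mul_pois {c d : ℝ} (hc : 0 ≤ c) (hd : 0 ≤ d) :
    HasSum (fun k => √((pois c).real {k} * (pois d).real {k}))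
      (Real.exp (-((√d - √c) ^ 2 / 2))) := by
  have hcd : (√c * √d) ^ 2 = c * d := by rw [mul_pow, Real.sq_sqrt hc, Real.sq_sqrt hd]
  have hexp : Real.exp (-(c + d) / 2) ^ 2 = Real.exp (-c) * Real.exp (-d) := by
    rw [← Real.exp_nat_mul, ← Real.exp_add]; ring_nf
  have hterm : ∀ k : ℕ, √((pois c).real {k} * (pois d).real {k}) =
      Real.exp (-(c + d) / 2) * ((√c * √d) ^ k / k.factorial) := fun k => by
    rw [pois_real_singleton hc, pois_real_singleton hd, ← Real.sqrt_sq (by positivity :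
      0 ≤ Real.exp (-(c + d) / 2) * ((√c * √d) ^ k / k.factorial))]
    congr 1
    rw [mul_pow, div_pow, hexp, ← pow_mul, mul_comm k 2, pow_mul, hcd]
    ring
  have hseries : HasSum (fun k : ℕ => (√c * √d) ^ k / k.factorial) (Real.exp (√c * √d)) := by
    rw [Real.exp_eq_exp_ℝ]
    exact NormedSpace.expSeries_div_hasSum_exp _
  have hexponent : -(c + d) / 2 + √c * √d = -((√d - √c) ^ 2 / 2) := by
    nlinarith [Real.sq_sqrt hc, Real.sq_sqrt hd]
  rw [funext hterm, ← hexponent, Real.exp_add]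
  exact hseries.mul_left _

end Poisson

theorem stmt3_general (a : ℤ → ℝ) (ha : ∀ n, 0 < a n)
    (η η' : Measure (ℤ → ℕ))
    (hη : IsProductOf η fun n => pois (a n))
    (hη' : IsProductOf η' fun n => pois (a (n - 1))) :
    (η' ≪ η ∧ η ≪ η') ↔
      Summable fun n : ℤ => (Real.sqrt (a (n - 1)) - Real.sqrt (a n)) ^ 2 := by
  obtain rfl := hη.eq_infinitePi
  obtain rfl := hη'.eq_infinitePi
  have hpos : ∀ n k, 0 < (pois (a n)).real {k} := fun n => pois_real_singleton_pos (ha n)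
  have hH : ∀ n, HasSum (fun k => √((pois (a n)).real {k} * (pois (a (n - 1))).real {k}))
      (Real.exp (-((√(a (n - 1)) - √(a n)) ^ 2 / 2))) := fun n =>
    hasSum_sqrt_pois_mul_pois (ha n).le (ha (n - 1)).le
  have hH' : ∀ n, HasSum (fun k => √((pois (a (n - 1))).real {k} * (pois (a n)).real {k}))
      (Real.exp (-((√(a (n - 1)) - √(a n)) ^ 2 / 2))) := by
    simpa only [mul_comm] using hH
  rw [← summable_div_const_iff (two_ne_zero' ℝ)]
  exact ⟨fun h => (absolutelyContinuous_infinitePi_iff hpos (fun n => hpos (n - 1)) hH).1 h.1,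
    fun h => ⟨absolutelyContinuous_infinitePi_of_summable hpos hH h,
      absolutelyContinuous_infinitePi_of_summable (fun n => hpos (n - 1)) hH' h⟩⟩

/-- Let `(a_n)_{n∈ℤ}` be positive reals.  The product measures `⊗_{n∈ℤ} Pois(a_{n-1})` and
`η = ⊗_{n∈ℤ} Pois(a_n)` on `ℕ^ℤ` are mutually absolutely continuous if and only if
`Σ_{n∈ℤ} (√(a_{n-1}) - √(a_n))² < ∞`. -/
theorem stmt3 (a : ℤ → ℝ) (ha : ∀ n, 0 < a n)
    (η η' : Measure (ℤ → ℕ)) [IsProbabilityMeasure η] [IsProbabilityMeasure η']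
    (hη : IsProductOf η fun n => pois (a n))
    (hη' : IsProductOf η' fun n => pois (a (n - 1))) :
    (η' ≪ η ∧ η ≪ η') ↔
      Summable fun n : ℤ => (Real.sqrt (a (n - 1)) - Real.sqrt (a n)) ^ 2 :=
  stmt3_general a ha η η' hη hη'
end

section
/- Let a > 0 and let (ε_j)_{j≥1} satisfy ε_j → 0, Σ_{j≥1} ε_j² = ∞ and Σ_{j≥1} ε_j⁴ < ∞. Then the partial sums Σ_{j=1}^n X_j tend to −∞ in probability: for every p > 0, lim_{n→∞} η( { z ∈ Z : Σ_{j=1}^n X_j(z) > −p } ) = 0. -/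
open MeasureTheory ProbabilityTheory Filter

/-- `IsProductOf' η μ` says that `η` is the infinite product `⊗_j μ j` of the probability
measures `μ j` on `ℕ × ℕ`, i.e. `η` gives each cylinder set the corresponding product value. -/
def IsProductOf' (η : Measure (ℕ → ℕ × ℕ)) (μ : ℕ → Measure (ℕ × ℕ)) : Prop :=
  ∀ (F : Finset ℕ) (v : ℕ → ℕ × ℕ), η {z | ∀ j ∈ F, z j = v j} = ∏ j ∈ F, μ j {v j}

open scoped ENNReal

/-!
Chernoff bound with exponent `1/2`. For independent `X ~ Pois(b e^t)` and `Y ~ Pois(b)` one has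
`E[exp(t (Y - X) / 2)] = exp(b e^t (e^{-t/2} - 1) + b (e^{t/2} - 1)) = exp(-b (e^{t/2} - 1)²)`,
so by independence and Markov's inequality
`η{Σ_{j<n} X_j > -p} ≤ e^{p/2} exp(-a Σ_{j<n} (e^{ε_j/2} - 1)²)`.
Since `(e^{x/2} - 1)² ≍ x²/4` as `x → 0` and `ε_j → 0`, the series in the exponent diverges
together with `Σ ε_j²`, and the bound tends to `0`.
-/

instance inst_s11 (a : ℝ) : IsProbabilityMeasure (pois a) := by
  unfold pois; infer_instance

theorem lintegral_exp_mul_pois {b : ℝ} (hb : 0 ≤ b) (s : ℝ) :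
    ∫⁻ k, ENNReal.ofReal (Real.exp (s * k)) ∂pois b
      = ENNReal.ofReal (Real.exp (b * (Real.exp s - 1))) := by
  have hterm : ∀ k : ℕ, ENNReal.ofReal (Real.exp (s * k)) * pois b {k}
      = ENNReal.ofReal (Real.exp (-b) * ((b * Real.exp s) ^ k / k.factorial)) := by
    intro k
    rw [pois, poissonMeasure_singleton, Real.coe_toNNReal b hb,
      ← ENNReal.ofReal_mul (by positivity), mul_pow, ← Real.exp_nat_mul, mul_comm (k : ℝ)]
    ring_nf
  rw [lintegral_countable', tsum_congr hterm,
    ← ENNReal.ofReal_tsum_of_nonneg (fun k => by positivity)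
      ((Real.summable_pow_div_factorial _).mul_left _),
    tsum_mul_left, ← congrFun NormedSpace.exp_eq_tsum_div, ← Real.exp_eq_exp_ℝ, ← Real.exp_add]
  ring_nf

theorem lintegral_exp_half_mul_sub_pois_prod {a : ℝ} (ha : 0 ≤ a) (t : ℝ) :
    ∫⁻ w, ENNReal.ofReal (Real.exp (t * ((w.2 : ℝ) - w.1) / 2))
        ∂(pois (a * Real.exp t)).prod (pois a)
      = ENNReal.ofReal (Real.exp (-(a * (Real.exp (t / 2) - 1) ^ 2))) := by
  have hsplit : ∀ w : ℕ × ℕ, ENNReal.ofReal (Real.exp (t * ((w.2 : ℝ) - w.1) / 2))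
      = ENNReal.ofReal (Real.exp (-(t / 2) * w.1)) * ENNReal.ofReal (Real.exp (t / 2 * w.2)) := by
    intro w
    rw [← ENNReal.ofReal_mul (Real.exp_nonneg _), ← Real.exp_add]
    ring_nf
  simp_rw [hsplit]
  rw [lintegral_prod_mul (f := fun x : ℕ => ENNReal.ofReal (Real.exp (-(t / 2) * x)))
    (g := fun y : ℕ => ENNReal.ofReal (Real.exp (t / 2 * y))) (by fun_prop) (by fun_prop),
    lintegral_exp_mul_pois (by positivity),
    lintegral_exp_mul_pois ha, ← ENNReal.ofReal_mul (Real.exp_nonneg _), ← Real.exp_add]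
  have hexp : Real.exp t = Real.exp (t / 2) ^ 2 := by rw [← Real.exp_nat_mul]; ring_nf
  have hinv : Real.exp (-(t / 2)) * Real.exp (t / 2) = 1 := by rw [← Real.exp_add]; simp
  congr 2
  rw [hexp]
  linear_combination a * Real.exp (t / 2) * hinv

theorem lintegral_pi_prod {ι : Type*} [Fintype ι] {α : ι → Type*} [∀ i, MeasurableSpace (α i)]
    (μ : ∀ i, Measure (α i)) [∀ i, IsProbabilityMeasure (μ i)] {f : ∀ i, α i → ℝ≥0∞}
    (hf : ∀ i, Measurable (f i)) :
    ∫⁻ x, ∏ i, f i (x i) ∂Measure.pi μ = ∏ i, ∫⁻ y, f i y ∂μ i := by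
  rw [lintegral_prod_eq_prod_lintegral_of_indepFun _ _
    (iIndepFun_pi fun i => (hf i).aemeasurable) fun i => (hf i).comp (measurable_pi_apply i)]
  exact Finset.prod_congr rfl fun i _ => (measurePreserving_eval μ i).lintegral_comp (hf i)

theorem IsProductOf'.map_restrict_eq_pi {η : Measure (ℕ → ℕ × ℕ)} {μ : ℕ → Measure (ℕ × ℕ)}
    [∀ j, SigmaFinite (μ j)] (hη : IsProductOf' η μ) (F : Finset ℕ) :
    η.map (fun z (j : F) => z j) = Measure.pi fun j : F => μ j := by
  classical
  refine Measure.ext_of_singleton fun v => ?_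
  rw [Measure.pi_singleton, Measure.map_apply (by fun_prop) (measurableSet_singleton v)]
  set w : ℕ → ℕ × ℕ := fun j => if h : j ∈ F then v ⟨j, h⟩ else (0, 0)
  have hpre : (fun (z : ℕ → ℕ × ℕ) (j : F) => z j) ⁻¹' {v} = {z | ∀ j ∈ F, z j = w j} := by
    ext z
    simp +contextual [w, funext_iff]
  rw [hpre, hη F w, ← Finset.prod_coe_sort F]
  simp [w]

theorem IsProductOf'.lintegral_prod {η : Measure (ℕ → ℕ × ℕ)} {μ : ℕ → Measure (ℕ × ℕ)}
    [∀ j, IsProbabilityMeasure (μ j)] (hη : IsProductOf' η μ) (F : Finset ℕ)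
    (f : ℕ → ℕ × ℕ → ℝ≥0∞) :
    ∫⁻ z, ∏ j ∈ F, f j (z j) ∂η = ∏ j ∈ F, ∫⁻ w, f j w ∂μ j := by
  calc ∫⁻ z, ∏ j ∈ F, f j (z j) ∂η
      = ∫⁻ x, ∏ j : F, f j (x j) ∂η.map (fun z (j : F) => z j) := by
        rw [lintegral_map (by fun_prop) (by fun_prop)]
        simp_rw [Finset.prod_coe_sort F fun j => f j _]
    _ = ∏ j ∈ F, ∫⁻ w, f j w ∂μ j := by
        rw [hη.map_restrict_eq_pi, lintegral_pi_prod _ fun j => measurable_of_countable _]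
        exact Finset.prod_coe_sort F fun j => ∫⁻ w, f j w ∂μ j

theorem measure_lt_le_exp_mul_lintegral {Ω : Type*} [MeasurableSpace Ω] (μ : Measure Ω)
    {S : Ω → ℝ} (hS : AEMeasurable S μ) {t : ℝ} (ht : 0 ≤ t) (c : ℝ) :
    μ {ω | c < S ω}
      ≤ ENNReal.ofReal (Real.exp (-(t * c))) * ∫⁻ ω, ENNReal.ofReal (Real.exp (t * S ω)) ∂μ := by
  have hsub : {ω | c < S ω}
      ⊆ {ω | ENNReal.ofReal (Real.exp (t * c)) ≤ ENNReal.ofReal (Real.exp (t * S ω))} :=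
    fun ω hω => ENNReal.ofReal_le_ofReal (Real.exp_le_exp.mpr
      (mul_le_mul_of_nonneg_left hω.le ht))
  calc μ {ω | c < S ω}
      = ENNReal.ofReal (Real.exp (-(t * c)))
          * (ENNReal.ofReal (Real.exp (t * c)) * μ {ω | c < S ω}) := by
        rw [← mul_assoc, ← ENNReal.ofReal_mul (Real.exp_nonneg _), ← Real.exp_add,
          neg_add_cancel, Real.exp_zero, ENNReal.ofReal_one, one_mul]
    _ ≤ ENNReal.ofReal (Real.exp (-(t * c))) * ∫⁻ ω, ENNReal.ofReal (Real.exp (t * S ω)) ∂μ := by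
        gcongr
        exact (mul_le_mul_right (measure_mono hsub) _).trans
          (mul_meas_ge_le_lintegral₀ (by fun_prop) _)

theorem not_summable_sq_exp_half_sub_one {ε : ℕ → ℝ} (hε0 : Tendsto ε atTop (nhds 0))
    (hε2 : ¬ Summable fun j => ε j ^ 2) :
    ¬ Summable fun j => (Real.exp (ε j / 2) - 1) ^ 2 := by
  have hderiv : HasDerivAt (fun x => Real.exp (x / 2)) (1 / 2) 0 := by
    simpa using ((hasDerivAt_id (0 : ℝ)).div_const 2).exp
  have hO : (fun x => x) =O[nhds 0] fun x => Real.exp (x / 2) - 1 := by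
    simpa [Function.comp_def] using (hderiv.isTheta_sub (by norm_num)).isBigO_symm
  exact fun h => hε2 (summable_of_isBigO_nat h ((hO.comp_tendsto hε0).pow 2))

theorem lintegral_exp_half_partialSum {a : ℝ} (ha : 0 ≤ a) {ε : ℕ → ℝ}
    {η : Measure (ℕ → ℕ × ℕ)}
    (hη : IsProductOf' η fun j => (pois (a * Real.exp (ε j))).prod (pois a)) (n : ℕ) :
    ∫⁻ z, ENNReal.ofReal
        (Real.exp (1 / 2 * ∑ j ∈ Finset.range n, ε j * (((z j).2 : ℝ) - ((z j).1 : ℝ)))) ∂η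
      = ENNReal.ofReal
        (Real.exp (-(a * ∑ j ∈ Finset.range n, (Real.exp (ε j / 2) - 1) ^ 2))) := by
  have hfactor : ∀ z : ℕ → ℕ × ℕ, ENNReal.ofReal
        (Real.exp (1 / 2 * ∑ j ∈ Finset.range n, ε j * (((z j).2 : ℝ) - ((z j).1 : ℝ))))
      = ∏ j ∈ Finset.range n,
          ENNReal.ofReal (Real.exp (ε j * (((z j).2 : ℝ) - ((z j).1 : ℝ)) / 2)) := by
    intro z
    rw [Finset.mul_sum, Real.exp_sum, ENNReal.ofReal_prod_of_nonneg fun _ _ => Real.exp_nonneg _]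
    exact Finset.prod_congr rfl fun j _ => by ring_nf
  simp_rw [hfactor]
  rw [hη.lintegral_prod (Finset.range n)
    fun j w => ENNReal.ofReal (Real.exp (ε j * ((w.2 : ℝ) - (w.1 : ℝ)) / 2))]
  simp_rw [lintegral_exp_half_mul_sub_pois_prod ha]
  rw [← ENNReal.ofReal_prod_of_nonneg fun _ _ => Real.exp_nonneg _, ← Real.exp_sum,
    Finset.mul_sum, Finset.sum_neg_distrib]

theorem stmt11_general (a : ℝ) (ha : 0 < a) (ε : ℕ → ℝ)
    (hε0 : Tendsto ε atTop (nhds 0))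
    (hε2 : ¬ Summable fun j => ε j ^ 2)
    (η : Measure (ℕ → ℕ × ℕ))
    (hη : IsProductOf' η fun j => (pois (a * Real.exp (ε j))).prod (pois a)) :
    ∀ p : ℝ, 0 < p →
      Tendsto (fun n : ℕ =>
          η {z | -p < ∑ j ∈ Finset.range n, ε j * (((z j).2 : ℝ) - ((z j).1 : ℝ))})
        atTop (nhds 0) := by
  intro p _
  set c : ℕ → ℝ := fun n => ∑ j ∈ Finset.range n, (Real.exp (ε j / 2) - 1) ^ 2
  have hc : Tendsto c atTop atTop :=
    (not_summable_iff_tendsto_nat_atTop_of_nonneg fun j => sq_nonneg _).mp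
      (not_summable_sq_exp_half_sub_one hε0 hε2)
  have hbound : ∀ n, η {z | -p < ∑ j ∈ Finset.range n, ε j * (((z j).2 : ℝ) - ((z j).1 : ℝ))}
      ≤ ENNReal.ofReal (Real.exp (p / 2 - a * c n)) := by
    intro n
    calc _ ≤ ENNReal.ofReal (Real.exp (-(1 / 2 * -p))) * ∫⁻ z, ENNReal.ofReal (Real.exp
              (1 / 2 * ∑ j ∈ Finset.range n, ε j * (((z j).2 : ℝ) - ((z j).1 : ℝ)))) ∂η :=
          measure_lt_le_exp_mul_lintegral η (by fun_prop) (by norm_num) (-p)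
      _ = ENNReal.ofReal (Real.exp (p / 2 - a * c n)) := by
          rw [lintegral_exp_half_partialSum ha.le hη, ← ENNReal.ofReal_mul (Real.exp_nonneg _),
            ← Real.exp_add]
          congr 2
          ring
  have hlim : Tendsto (fun n => ENNReal.ofReal (Real.exp (p / 2 - a * c n))) atTop (nhds 0) := by
    have hexp := Real.tendsto_exp_atBot.comp <| tendsto_atBot_add_const_left atTop (p / 2)
      (tendsto_neg_atTop_atBot.comp (hc.const_mul_atTop ha))
    simpa [Function.comp_def, sub_eq_add_neg] using ENNReal.tendsto_ofReal hexp
  exact tendsto_of_tendsto_of_tendsto_of_le_of_le tendsto_const_nhds hlim (fun _ => zero_le)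
    hbound

/-- On `Z = (ℕ×ℕ)^ℕ` with `η = ⊗_j (Pois(a e^{ε_j}) ⊗ Pois(a))` and
`X_j(z) := ε_j (y_j - x_j)`: if `ε_j → 0`, `Σ ε_j² = ∞` and `Σ ε_j⁴ < ∞`, then the partial
sums `Σ_{j<n} X_j` tend to `-∞` in probability, i.e. for every `p > 0`,
`η{z : Σ_{j<n} X_j(z) > -p} → 0` as `n → ∞`. -/
theorem stmt11 (a : ℝ) (ha : 0 < a) (ε : ℕ → ℝ)
    (hε0 : Tendsto ε atTop (nhds 0))
    (hε2 : ¬ Summable fun j => ε j ^ 2)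
    (hε4 : Summable fun j => ε j ^ 4)
    (η : Measure (ℕ → ℕ × ℕ)) [IsProbabilityMeasure η]
    (hη : IsProductOf' η fun j => (pois (a * Real.exp (ε j))).prod (pois a)) :
    ∀ p : ℝ, 0 < p →
      Tendsto (fun n : ℕ =>
          η {z | -p < ∑ j ∈ Finset.range n, ε j * (((z j).2 : ℝ) - ((z j).1 : ℝ))})
        atTop (nhds 0) :=
  stmt11_general a ha ε hε0 hε2 η hη
end

section
/- Let a > 0 and let (ε_j)_{j≥1} satisfy ε_j → 0, Σ_{j≥1} ε_j² = ∞ and Σ_{j≥1} ε_j⁴ < ∞. Then for η-almost every z ∈ Z, X_n(z) → 0 as n → ∞; that is, for every δ > 0 there is N such that |ε_n (y_n − x_n)| < δ for all n > N. -/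
/-!
By Markov's inequality for the fourth power, `η {δ ≤ |X_n|} ≤ ε_n⁴ E[(y_n - x_n)⁴] / δ⁴`.
The fourth moments are bounded uniformly in `n`: `(y - x)⁴ ≤ 4! e^x e^y`, a Poisson variable
of rate `r` has `E e^x = e^{r(e-1)}`, and the rates `a e^{ε_n}` are bounded since `ε_n → 0`.
Hence `Σ ε_n⁴ < ∞` makes the probabilities summable, and Borel–Cantelli gives `|X_n| < δ`
eventually, almost surely, for every `δ = 1/(m+1)`.
-/

open MeasureTheory ProbabilityTheory Filter
open scoped ENNReal NNReal Nat Topology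

section BorelCantelli

variable {Ω : Type*} [MeasurableSpace Ω] {μ : Measure Ω}

theorem ae_tendsto_zero_of_tsum_measure_le_abs_ne_top {f : ℕ → Ω → ℝ}
    (h : ∀ δ > 0, ∑' n, μ {ω | δ ≤ |f n ω|} ≠ ∞) :
    ∀ᵐ ω ∂μ, Tendsto (fun n => f n ω) atTop (𝓝 0) := by
  have hall : ∀ᵐ ω ∂μ, ∀ m : ℕ, ∀ᶠ n in atTop, |f n ω| < 1 / (m + 1) :=
    ae_all_iff.mpr fun m => by
      simpa only [Set.mem_ofPred_eq, not_le] using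
        ae_eventually_notMem (h _ Nat.one_div_pos_of_nat)
  filter_upwards [hall] with ω hω
  refine NormedAddGroup.tendsto_nhds_zero.mpr fun δ hδ => ?_
  obtain ⟨m, hm⟩ := exists_nat_one_div_lt hδ
  exact (hω m).mono fun n hn => hn.trans hm

theorem measure_le_abs_mul_le_lintegral_pow_four {Y : Ω → ℝ} (hY : Measurable Y) (c : ℝ)
    {δ : ℝ} (hδ : 0 < δ) :
    μ {ω | δ ≤ |c * Y ω|}
      ≤ ENNReal.ofReal (c ^ 4 / δ ^ 4) * ∫⁻ ω, ENNReal.ofReal (Y ω ^ 4) ∂μ := by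
  set I := ∫⁻ ω, ENNReal.ofReal (Y ω ^ 4) ∂μ
  have hmarkov := mul_meas_ge_le_lintegral (μ := μ)
    ((hY.const_mul c).pow_const 4).ennreal_ofReal (ENNReal.ofReal (δ ^ 4))
  simp_rw [mul_pow, ENNReal.ofReal_mul (by positivity : (0 : ℝ) ≤ c ^ 4)] at hmarkov
  rw [lintegral_const_mul _ (hY.pow_const 4).ennreal_ofReal, mul_comm] at hmarkov
  calc μ {ω | δ ≤ |c * Y ω|}
      ≤ μ {ω | ENNReal.ofReal (δ ^ 4) ≤ ENNReal.ofReal (c ^ 4) * ENNReal.ofReal (Y ω ^ 4)} := by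
        refine measure_mono fun ω hω => ?_
        rw [Set.mem_ofPred_eq, ← ENNReal.ofReal_mul (by positivity), ← mul_pow,
          ← (by decide : Even 4).pow_abs (c * Y ω)]
        exact ENNReal.ofReal_le_ofReal (pow_le_pow_left₀ hδ.le hω 4)
    _ ≤ ENNReal.ofReal (c ^ 4) * I / ENNReal.ofReal (δ ^ 4) :=
        (ENNReal.le_div_iff_mul_le (.inl (by simp [hδ])) (.inl ENNReal.ofReal_ne_top)).mpr hmarkov
    _ = ENNReal.ofReal (c ^ 4 / δ ^ 4) * I := by
        rw [ENNReal.ofReal_div_of_pos (by positivity), ENNReal.mul_div_right_comm]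

theorem ae_tendsto_mul_zero_of_lintegral_pow_four_le {c : ℕ → ℝ}
    (hc : Summable fun n => c n ^ 4) {Y : ℕ → Ω → ℝ} (hY : ∀ n, Measurable (Y n))
    {C : ℝ≥0∞} (hC : C ≠ ∞) (hYC : ∀ n, ∫⁻ ω, ENNReal.ofReal (Y n ω ^ 4) ∂μ ≤ C) :
    ∀ᵐ ω ∂μ, Tendsto (fun n => c n * Y n ω) atTop (𝓝 0) := by
  refine ae_tendsto_zero_of_tsum_measure_le_abs_ne_top fun δ hδ => ?_
  have hsum : Summable fun n => c n ^ 4 / δ ^ 4 := hc.div_const _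
  refine ne_top_of_le_ne_top ?_ (ENNReal.tsum_le_tsum fun n =>
    (measure_le_abs_mul_le_lintegral_pow_four (hY n) (c n) hδ).trans (mul_le_mul_right (hYC n) _))
  rw [ENNReal.tsum_mul_right, ← ENNReal.ofReal_tsum_of_nonneg (fun n => by positivity) hsum]
  exact ENNReal.mul_ne_top ENNReal.ofReal_ne_top hC

end BorelCantelli

theorem lintegral_exp_poissonMeasure (r : ℝ≥0) :
    ∫⁻ n, ENNReal.ofReal (Real.exp n) ∂poissonMeasure r
      = ENNReal.ofReal (Real.exp (r * (Real.exp 1 - 1))) := by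
  have hsum := (NormedSpace.expSeries_div_hasSum_exp ((r : ℝ) * Real.exp 1)).mul_left
    (Real.exp (-r))
  have hterm (n : ℕ) :
      ENNReal.ofReal (Real.exp (-r) * r ^ n / n !) * ENNReal.ofReal (Real.exp n)
        = ENNReal.ofReal (Real.exp (-r) * ((r * Real.exp 1) ^ n / n !)) := by
    rw [← ENNReal.ofReal_mul (by positivity), mul_pow, ← Real.exp_nat_mul, mul_one]
    ring_nf
  rw [poissonMeasure, lintegral_sum_measure]
  simp only [lintegral_smul_measure, lintegral_dirac, smul_eq_mul, hterm]
  rw [← ENNReal.ofReal_tsum_of_nonneg (fun n => by positivity) hsum.summable, hsum.tsum_eq,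
    ← Real.exp_eq_exp_ℝ, ← Real.exp_add]
  ring_nf

theorem sub_pow_four_le_mul_exp_mul_exp {x y : ℝ} (hx : 0 ≤ x) (hy : 0 ≤ y) :
    (y - x) ^ 4 ≤ 24 * (Real.exp x * Real.exp y) := by
  have h := Real.pow_div_factorial_le_exp _ (abs_nonneg (y - x)) 4
  rw [pow_abs, abs_of_nonneg (by positivity),
    show ((4 ! : ℕ) : ℝ) = 24 by norm_num [Nat.factorial]] at h
  calc (y - x) ^ 4 ≤ 24 * Real.exp |y - x| := by linarith
    _ ≤ 24 * (Real.exp x * Real.exp y) := by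
        rw [← Real.exp_add]
        gcongr
        exact abs_sub_le_iff.mpr ⟨by linarith, by linarith⟩

theorem lintegral_sub_pow_four_prod_le (μ ν : Measure ℕ) [SFinite ν] :
    ∫⁻ v : ℕ × ℕ, ENNReal.ofReal (((v.2 : ℝ) - v.1) ^ 4) ∂μ.prod ν
      ≤ 24 * ((∫⁻ n, ENNReal.ofReal (Real.exp n) ∂μ) * ∫⁻ n, ENNReal.ofReal (Real.exp n) ∂ν) := by
  rw [← lintegral_prod_mul (by fun_prop) (by fun_prop), ← lintegral_const_mul _ (by fun_prop)]
  refine lintegral_mono fun v => ?_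
  rw [← ENNReal.ofReal_mul (by positivity), ← ENNReal.ofReal_ofNat,
    ← ENNReal.ofReal_mul (by norm_num)]
  exact ENNReal.ofReal_le_ofReal
    (sub_pow_four_le_mul_exp_mul_exp (Nat.cast_nonneg _) (Nat.cast_nonneg _))

theorem lintegral_sub_pow_four_prod_poissonMeasure_le (r s : ℝ≥0) :
    ∫⁻ v : ℕ × ℕ, ENNReal.ofReal (((v.2 : ℝ) - v.1) ^ 4)
        ∂(poissonMeasure r).prod (poissonMeasure s)
      ≤ 24 * ENNReal.ofReal (Real.exp ((r + s) * (Real.exp 1 - 1))) := by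
  refine (lintegral_sub_pow_four_prod_le _ _).trans_eq ?_
  rw [lintegral_exp_poissonMeasure, lintegral_exp_poissonMeasure,
    ← ENNReal.ofReal_mul (by positivity), ← Real.exp_add, add_mul]

theorem IsProductOf'.map_eval {η : Measure (ℕ → ℕ × ℕ)} {μ : ℕ → Measure (ℕ × ℕ)}
    (hη : IsProductOf' η μ) (n : ℕ) : η.map (fun z => z n) = μ n := by
  refine Measure.ext_of_singleton fun v => ?_
  rw [Measure.map_apply (measurable_pi_apply n) (measurableSet_singleton v)]
  simpa [Set.preimage] using hη {n} fun _ => v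

theorem stmt12_general (a : ℝ) (ha : 0 < a) (ε : ℕ → ℝ)
    (hε0 : Tendsto ε atTop (nhds 0))
    (hε4 : Summable fun j => ε j ^ 4)
    (η : Measure (ℕ → ℕ × ℕ))
    (hη : IsProductOf' η fun j => (pois (a * Real.exp (ε j))).prod (pois a)) :
    ∀ᵐ z ∂η, Tendsto (fun n : ℕ => ε n * (((z n).2 : ℝ) - ((z n).1 : ℝ)))
      atTop (nhds 0) := by
  obtain ⟨B, hB⟩ := hε0.bddAbove_range
  refine ae_tendsto_mul_zero_of_lintegral_pow_four_le hε4 (fun n => by fun_prop)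
    (C := 24 * ENNReal.ofReal (Real.exp ((a * Real.exp B + a) * (Real.exp 1 - 1))))
    (by finiteness) fun n => ?_
  have hrate : ((a * Real.exp (ε n)).toNNReal : ℝ) ≤ a * Real.exp B := by
    rw [Real.coe_toNNReal _ (by positivity)]
    gcongr
    exact hB ⟨n, rfl⟩
  rw [← lintegral_map (f := fun v : ℕ × ℕ => ENNReal.ofReal (((v.2 : ℝ) - v.1) ^ 4))
    (by fun_prop) (measurable_pi_apply n), hη.map_eval n]
  refine (lintegral_sub_pow_four_prod_poissonMeasure_le _ _).trans ?_
  have hexp : 0 ≤ Real.exp 1 - 1 := by linarith [Real.add_one_le_exp 1]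
  rw [Real.coe_toNNReal _ ha.le]
  gcongr

/-- On `Z = (ℕ×ℕ)^ℕ` with `η = ⊗_j (Pois(a e^{ε_j}) ⊗ Pois(a))` and
`X_j(z) := ε_j (y_j - x_j)`: if `ε_j → 0`, `Σ ε_j² = ∞` and `Σ ε_j⁴ < ∞`, then for `η`-a.e.
`z`, `X_n(z) → 0` as `n → ∞`. -/
theorem stmt12 (a : ℝ) (ha : 0 < a) (ε : ℕ → ℝ)
    (hε0 : Tendsto ε atTop (nhds 0))
    (hε2 : ¬ Summable fun j => ε j ^ 2)
    (hε4 : Summable fun j => ε j ^ 4)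
    (η : Measure (ℕ → ℕ × ℕ)) [IsProbabilityMeasure η]
    (hη : IsProductOf' η fun j => (pois (a * Real.exp (ε j))).prod (pois a)) :
    ∀ᵐ z ∂η, Tendsto (fun n : ℕ => ε n * (((z n).2 : ℝ) - ((z n).1 : ℝ)))
      atTop (nhds 0) :=
  stmt12_general a ha ε hε0 hε4 η hη
end

section
/- Let a > 0, b > 0, and let X and Y be independent ℕ-valued random variables with X distributed Pois(a) and Y distributed Pois(b). Then for every natural number L ≥ 1, P( |X − Y| ≥ L ) ≤ e^{a − b + ab} · (a^L e^a + b^L e^b) / L!. -/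
/-!
If `|X - Y| ≥ L` then `X ≥ L` or `Y ≥ L`. A Poisson tail satisfies `P(X ≥ L) ≤ a^L / L!`,
because `k! L! ≤ (k + L)!` gives `P(X = k + L) ≤ (a^L / L!) P(X = k)`. Hence the probability is
at most `(a^L + b^L) / L!`, and the elementary inequality
`a^L + b^L ≤ e^{a - b + ab} (a^L e^a + b^L e^b)` finishes.
-/

open MeasureTheory ProbabilityTheory

open Real Set
open scoped NNReal Nat

theorem pow_add_div_factorial_le {r : ℝ} (hr : 0 ≤ r) (k L : ℕ) :
    r ^ (k + L) / (k + L)! ≤ r ^ k / k ! * (r ^ L / L !) := by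
  have hfac : (k ! * L ! : ℝ) ≤ (k + L)! := by
    exact_mod_cast Nat.le_of_dvd (Nat.factorial_pos _)
      (Nat.factorial_mul_factorial_dvd_factorial_add k L)
  rw [div_mul_div_comm, ← pow_add]
  gcongr

theorem poissonMeasure_Ici_le (r : ℝ≥0) (L : ℕ) :
    Po(r) (Ici L) ≤ ENNReal.ofReal (r ^ L / L !) := by
  have hsum : ∑' k, Po(r) {k} = 1 := by
    simpa using Measure.tsum_indicator_apply_singleton Po(r) univ .univ
  calc Po(r) (Ici L) = ∑' n, (Ici L).indicator (fun n ↦ Po(r) {n}) n :=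
        (Measure.tsum_indicator_apply_singleton _ _ measurableSet_Ici).symm
    _ = ∑' k, Po(r) {k + L} := by
        rw [← ENNReal.summable.sum_add_tsum_nat_add' (k := L), Finset.sum_eq_zero, zero_add]
        · simp
        · exact fun n hn ↦ indicator_of_notMem (by simpa using Finset.mem_range.1 hn) _
    _ ≤ ∑' k, ENNReal.ofReal (r ^ L / L !) * Po(r) {k} := by
        refine ENNReal.tsum_le_tsum fun k ↦ ?_
        rw [poissonMeasure_singleton, poissonMeasure_singleton,
          ← ENNReal.ofReal_mul (by positivity)]
        refine ENNReal.ofReal_le_ofReal ?_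
        calc exp (-r) * r ^ (k + L) / (k + L)! = exp (-r) * (r ^ (k + L) / (k + L)!) := by ring
          _ ≤ exp (-r) * (r ^ k / k ! * (r ^ L / L !)) := by
              gcongr; exact pow_add_div_factorial_le r.coe_nonneg k L
          _ = r ^ L / L ! * (exp (-r) * r ^ k / k !) := by ring
    _ = ENNReal.ofReal (r ^ L / L !) := by rw [ENNReal.tsum_mul_left, hsum, mul_one]

theorem poissonMeasure_real_Ici_le (r : ℝ≥0) (L : ℕ) :
    Po(r).real (Ici L) ≤ r ^ L / L ! :=
  ENNReal.toReal_le_of_le_ofReal (by positivity) (poissonMeasure_Ici_le r L)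

theorem measureReal_prod_setOf_le_abs_sub_le (μ ν : Measure ℕ) [IsProbabilityMeasure μ]
    [IsProbabilityMeasure ν] (L : ℕ) :
    (μ.prod ν).real {p : ℕ × ℕ | (L : ℤ) ≤ |(p.1 : ℤ) - (p.2 : ℤ)|}
      ≤ μ.real (Ici L) + ν.real (Ici L) := by
  have hsub : {p : ℕ × ℕ | (L : ℤ) ≤ |(p.1 : ℤ) - (p.2 : ℤ)|} ⊆ Ici L ×ˢ univ ∪ univ ×ˢ Ici L := by
    rintro ⟨m, n⟩ (h : (L : ℤ) ≤ |(m : ℤ) - n|)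
    simp only [mem_union, mem_prod, mem_Ici, mem_univ, and_true, true_and]
    rcases le_abs.1 h with h | h <;> omega
  calc _ ≤ (μ.prod ν).real (Ici L ×ˢ univ ∪ univ ×ˢ Ici L) := measureReal_mono hsub
    _ ≤ _ := (measureReal_union_le _ _).trans_eq (by simp [measureReal_prod_prod])

theorem pow_add_pow_le_exp_mul {a b : ℝ} (ha : 0 ≤ a) (hb : 0 ≤ b) {L : ℕ} (hL : L ≠ 0) :
    a ^ L + b ^ L ≤ exp (a - b + a * b) * (a ^ L * exp a + b ^ L * exp b) := by
  obtain ⟨m, rfl⟩ := Nat.exists_eq_add_one_of_ne_zero hL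
  have hea : exp (a - b + a * b) * exp a = exp (2 * a - b + a * b) := by
    rw [← exp_add]; ring_nf
  have heb : exp (a - b + a * b) * exp b = exp (a + a * b) := by
    rw [← exp_add]; ring_nf
  have hab_nonneg : 0 ≤ a * b := mul_nonneg ha hb
  have hb_gain : b ^ (m + 1) * (a + a * b) ≤ b ^ (m + 1) * (exp (a + a * b) - 1) := by
    have := add_one_le_exp (a + a * b)
    gcongr
    linarith
  rcases le_or_gt 0 (2 * a - b + a * b) with hx | hx
  · have ha_le : a ^ (m + 1) ≤ a ^ (m + 1) * exp (2 * a - b + a * b) :=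
      le_mul_of_one_le_right (by positivity) (one_le_exp hx)
    have : 0 ≤ b ^ (m + 1) * (a + a * b) := by positivity
    linear_combination ha_le + hb_gain + this - a ^ (m + 1) * hea - b ^ (m + 1) * heb
  · -- Now `b > 2a + ab`, so `a ≤ b`, and the `b`-term's gain pays for the `a`-term's loss.
    have hab : a ≤ b := by nlinarith
    have := add_one_le_exp (2 * a - b + a * b)
    have ha_loss : a ^ (m + 1) * (1 - exp (2 * a - b + a * b)) ≤ b ^ (m + 1) * (a + a * b) :=
      calc a ^ (m + 1) * (1 - exp (2 * a - b + a * b)) ≤ a ^ m * a * b := by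
            rw [pow_succ]; gcongr; linarith
        _ ≤ b ^ m * b * a := by rw [mul_right_comm]; gcongr
        _ ≤ b ^ (m + 1) * (a + a * b) := by rw [← pow_succ]; gcongr; linarith
    linear_combination ha_loss + hb_gain - a ^ (m + 1) * hea - b ^ (m + 1) * heb

/-- Tail bound for the Skellam distribution: if `X ~ Pois(a)` and `Y ~ Pois(b)` are
independent (modelled by the product measure `Pois(a) ⊗ Pois(b)` on `ℕ × ℕ`), then for
every natural number `L ≥ 1`,
`P(|X - Y| ≥ L) ≤ e^{a - b + ab} (a^L e^a + b^L e^b) / L!`. -/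
theorem stmt17 (a b : ℝ) (ha : 0 < a) (hb : 0 < b) (L : ℕ) (hL : 1 ≤ L) :
    (((pois a).prod (pois b)) {p : ℕ × ℕ | (L : ℤ) ≤ |(p.1 : ℤ) - (p.2 : ℤ)|}).toReal
      ≤ Real.exp (a - b + a * b) * (a ^ L * Real.exp a + b ^ L * Real.exp b)
          / (L.factorial : ℝ) := by
  have hpois {r : ℝ} (hr : 0 ≤ r) : (pois r).real (Ici L) ≤ r ^ L / L ! := by
    unfold pois
    simpa [Real.coe_toNNReal r hr] using poissonMeasure_real_Ici_le r.toNNReal L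
  have : IsProbabilityMeasure (pois a) := by unfold pois; infer_instance
  have : IsProbabilityMeasure (pois b) := by unfold pois; infer_instance
  calc _ ≤ (pois a).real (Ici L) + (pois b).real (Ici L) :=
        measureReal_prod_setOf_le_abs_sub_le _ _ L
    _ ≤ (a ^ L + b ^ L) / L ! := by rw [add_div]; exact add_le_add (hpois ha.le) (hpois hb.le)
    _ ≤ _ := by gcongr; exact pow_add_pow_le_exp_mul ha.le hb.le (by omega)
end

section
/- Let λ be Lebesgue measure on [0,1] and let (a_k)_{k∈ℤ} be nonnegative integrable functions on [0,1] with D := sup_{k∈ℤ} ∫ a_k dλ < ∞. Suppose there exist δ > 0 and N > 0 such that ∫ |a_i − a_j| dλ > δ whenever i > N and j < −N. Then there exist c > 0 and n₀ such that for every integer n ≥ n₀, Σ_{k∈ℤ} ∫ ( √(a_{k+n}) − √(a_k) )² dλ ≥ c·n. (In particular, one may use the inequality ∫|e − f| dλ ≤ ‖√e − √f‖_{L²(λ)} · ( √(∫ e dλ) + √(∫ f dλ) ), valid for nonnegative integrable e, f.) -/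
open MeasureTheory

/-!
Writing `a_i - a_j = (√a_i - √a_j)(√a_i + √a_j)`, Cauchy–Schwarz gives
`(∫ |a_i - a_j|)² ≤ 2 (∫ a_i + ∫ a_j) ∫ (√a_i - √a_j)² ≤ 4D ∫ (√a_i - √a_j)²`,
so `∫ (√a_i - √a_j)² > δ² / 4D` for every pair `i > N`, `j < -N`.
For a shift `n`, the pair `(k + n, k)` straddles the gap `[-N, N]` for the `n - 2N - 1`
indices `-N - 1 ≥ k ≥ N - n + 1`, which is at least `n / 2` once `n ≥ 4N + 2`.
-/

section Hellinger

variable {α : Type*} [MeasurableSpace α] {μ : Measure α}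

theorem sq_integral_abs_mul_abs_le {u v : α → ℝ} (hu : MemLp u 2 μ) (hv : MemLp v 2 μ) :
    (∫ x, |u x| * |v x| ∂μ) ^ 2 ≤ (∫ x, u x ^ 2 ∂μ) * ∫ x, v x ^ 2 ∂μ := by
  have hu' : MemLp u (ENNReal.ofReal 2) μ := by simpa using hu
  have hv' : MemLp v (ENNReal.ofReal 2) μ := by simpa using hv
  have hCS := integral_mul_norm_le_Lp_mul_Lq Real.HolderConjugate.two_two hu' hv'
  simp only [Real.norm_eq_abs, Real.rpow_two, sq_abs] at hCS
  have hU : 0 ≤ ∫ x, u x ^ 2 ∂μ := integral_nonneg fun x ↦ sq_nonneg _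
  have hV : 0 ≤ ∫ x, v x ^ 2 ∂μ := integral_nonneg fun x ↦ sq_nonneg _
  calc (∫ x, |u x| * |v x| ∂μ) ^ 2
      ≤ ((∫ x, u x ^ 2 ∂μ) ^ (1 / 2 : ℝ) * (∫ x, v x ^ 2 ∂μ) ^ (1 / 2 : ℝ)) ^ 2 :=
        pow_le_pow_left₀ (integral_nonneg fun x ↦ by positivity) hCS 2
    _ = (∫ x, u x ^ 2 ∂μ) * ∫ x, v x ^ 2 ∂μ := by
        rw [mul_pow, ← Real.sqrt_eq_rpow, ← Real.sqrt_eq_rpow, Real.sq_sqrt hU, Real.sq_sqrt hV]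

theorem memLp_two_sqrt {f : α → ℝ} (hf0 : 0 ≤ᵐ[μ] f) (hf : Integrable f μ) :
    MemLp (fun x ↦ √(f x)) 2 μ := by
  refine (memLp_two_iff_integrable_sq
    (Real.continuous_sqrt.comp_aestronglyMeasurable hf.aestronglyMeasurable)).2 ?_
  refine hf.congr ?_
  filter_upwards [hf0] with x hx
  exact (Real.sq_sqrt hx).symm

theorem sq_integral_abs_sub_le {f g : α → ℝ} (hf0 : 0 ≤ᵐ[μ] f) (hg0 : 0 ≤ᵐ[μ] g)
    (hf : Integrable f μ) (hg : Integrable g μ) :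
    (∫ x, |f x - g x| ∂μ) ^ 2 ≤
      2 * (∫ x, f x ∂μ + ∫ x, g x ∂μ) * ∫ x, (√(f x) - √(g x)) ^ 2 ∂μ := by
  have hsub := (memLp_two_sqrt hf0 hf).sub (memLp_two_sqrt hg0 hg)
  have hadd := (memLp_two_sqrt hf0 hf).add (memLp_two_sqrt hg0 hg)
  have hfactor : ∫ x, |f x - g x| ∂μ =
      ∫ x, |√(f x) - √(g x)| * |√(f x) + √(g x)| ∂μ := by
    refine integral_congr_ae ?_
    filter_upwards [hf0, hg0] with x hfx hgx
    rw [← abs_mul]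
    congr 1
    linear_combination -Real.sq_sqrt hfx + Real.sq_sqrt hgx
  have hsum : ∫ x, (√(f x) + √(g x)) ^ 2 ∂μ ≤ 2 * (∫ x, f x ∂μ + ∫ x, g x ∂μ) := by
    rw [← integral_add hf hg, ← integral_const_mul]
    refine integral_mono_ae hadd.integrable_sq ((hf.add hg).const_mul 2) ?_
    filter_upwards [hf0, hg0] with x hfx hgx
    nlinarith [Real.sq_sqrt hfx, Real.sq_sqrt hgx, sq_nonneg (√(f x) - √(g x))]
  have hQ : 0 ≤ ∫ x, (√(f x) - √(g x)) ^ 2 ∂μ := integral_nonneg fun x ↦ sq_nonneg _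
  rw [hfactor]
  calc _ ≤ (∫ x, (√(f x) - √(g x)) ^ 2 ∂μ) * ∫ x, (√(f x) + √(g x)) ^ 2 ∂μ :=
        sq_integral_abs_mul_abs_le hsub hadd
    _ ≤ _ := by rw [mul_comm]; exact mul_le_mul_of_nonneg_right hsum hQ

end Hellinger

theorem ofReal_mul_le_tsum_shift_of_separated (F : ℤ → ℤ → ENNReal) (q : ℝ) (hq : 0 ≤ q)
    (N : ℤ) (hF : ∀ i j : ℤ, N < i → j < -N → ENNReal.ofReal q ≤ F i j)
    (n : ℕ) (hn : 4 * N + 2 ≤ n) :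
    ENNReal.ofReal (q / 2 * n) ≤ ∑' k : ℤ, F (k + n) k := by
  set J := Finset.Icc (N - n + 1) (-N - 1)
  have hcard : (n : ℝ) / 2 ≤ J.card := by
    have : (J.card : ℤ) = n - 2 * N - 1 := by
      rw [Int.card_Icc_of_le _ _ (by omega)]; ring
    have hR : (J.card : ℝ) = n - 2 * N - 1 := by exact_mod_cast this
    have hnR : 4 * (N : ℝ) + 2 ≤ n := by exact_mod_cast hn
    linarith
  calc ENNReal.ofReal (q / 2 * n)
      ≤ ENNReal.ofReal (J.card * q) := ENNReal.ofReal_le_ofReal (by nlinarith)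
    _ = J.card • ENNReal.ofReal q := by
        rw [ENNReal.ofReal_mul (Nat.cast_nonneg _), ENNReal.ofReal_natCast, nsmul_eq_mul]
    _ ≤ ∑ k ∈ J, F (k + n) k := Finset.card_nsmul_le_sum _ _ _ fun k hk ↦ by
        rw [Finset.mem_Icc] at hk; exact hF _ _ (by omega) (by omega)
    _ ≤ ∑' k : ℤ, F (k + n) k := ENNReal.sum_le_tsum J

theorem stmt19_general (a : ℤ → ℝ → ℝ)
    (hnn : ∀ k : ℤ, ∀ x ∈ Set.Icc (0 : ℝ) 1, 0 ≤ a k x)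
    (hint : ∀ k : ℤ, IntegrableOn (a k) (Set.Icc (0 : ℝ) 1))
    (D : ℝ) (hD : ∀ k : ℤ, ∫ x in Set.Icc (0 : ℝ) 1, a k x ≤ D)
    (δ : ℝ) (hδ : 0 < δ) (N : ℤ)
    (hsep : ∀ i j : ℤ, N < i → j < -N →
      δ < ∫ x in Set.Icc (0 : ℝ) 1, |a i x - a j x|) :
    ∃ c : ℝ, 0 < c ∧ ∃ n₀ : ℕ, ∀ n : ℕ, n₀ ≤ n →
      ENNReal.ofReal (c * n) ≤ ∑' k : ℤ, ENNReal.ofReal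
        (∫ x in Set.Icc (0 : ℝ) 1,
          (Real.sqrt (a (k + (n : ℤ)) x) - Real.sqrt (a k x)) ^ 2) := by
  have hnn_ae k : 0 ≤ᵐ[volume.restrict (Set.Icc (0 : ℝ) 1)] a k :=
    ae_restrict_of_forall_mem measurableSet_Icc (hnn k)
  have hgap : ∀ i j : ℤ, N < i → j < -N →
      δ ^ 2 < 4 * D * ∫ x in Set.Icc (0 : ℝ) 1, (√(a i x) - √(a j x)) ^ 2 := by
    intro i j hi hj
    have hQ : 0 ≤ ∫ x in Set.Icc (0 : ℝ) 1, (√(a i x) - √(a j x)) ^ 2 :=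
      integral_nonneg fun x ↦ sq_nonneg _
    have := sq_integral_abs_sub_le (hnn_ae i) (hnn_ae j) (hint i) (hint j)
    nlinarith [hsep i j hi hj, hD i, hD j]
  have hDpos : 0 < D := by
    have hQ : 0 ≤ ∫ x in Set.Icc (0 : ℝ) 1, (√(a (N + 1) x) - √(a (-N - 1) x)) ^ 2 :=
      integral_nonneg fun x ↦ sq_nonneg _
    have := hgap (N + 1) (-N - 1) (by omega) (by omega)
    by_contra! hD0
    nlinarith
  refine ⟨δ ^ 2 / (4 * D) / 2, by positivity, (4 * N + 2).toNat, fun n hn ↦ ?_⟩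
  refine ofReal_mul_le_tsum_shift_of_separated
    (fun i j ↦ ENNReal.ofReal (∫ x in Set.Icc (0 : ℝ) 1, (√(a i x) - √(a j x)) ^ 2))
    (δ ^ 2 / (4 * D)) (by positivity) N (fun i j hi hj ↦ ?_) n (Int.toNat_le.mp hn)
  refine ENNReal.ofReal_le_ofReal ?_
  rw [div_le_iff₀ (by positivity), mul_comm]
  exact (hgap i j hi hj).le

/-- Let `λ` be Lebesgue measure on `[0,1]` and let `(a_k)_{k∈ℤ}` be nonnegative integrable
functions on `[0,1]` with `sup_k ∫ a_k dλ ≤ D < ∞`.  If there are `δ > 0` and `N > 0` such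
that `∫ |a_i - a_j| dλ > δ` whenever `i > N` and `j < -N`, then there are `c > 0` and `n₀`
such that for every `n ≥ n₀`, `Σ_{k∈ℤ} ∫ (√(a_{k+n}) - √(a_k))² dλ ≥ c·n`
(the possibly infinite sum is computed in `ℝ≥0∞`). -/
theorem stmt19 (a : ℤ → ℝ → ℝ)
    (hnn : ∀ k : ℤ, ∀ x ∈ Set.Icc (0 : ℝ) 1, 0 ≤ a k x)
    (hint : ∀ k : ℤ, IntegrableOn (a k) (Set.Icc (0 : ℝ) 1))
    (D : ℝ) (hD : ∀ k : ℤ, ∫ x in Set.Icc (0 : ℝ) 1, a k x ≤ D)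
    (δ : ℝ) (hδ : 0 < δ) (N : ℤ) (hN : 0 < N)
    (hsep : ∀ i j : ℤ, N < i → j < -N →
      δ < ∫ x in Set.Icc (0 : ℝ) 1, |a i x - a j x|) :
    ∃ c : ℝ, 0 < c ∧ ∃ n₀ : ℕ, ∀ n : ℕ, n₀ ≤ n →
      ENNReal.ofReal (c * n) ≤ ∑' k : ℤ, ENNReal.ofReal
        (∫ x in Set.Icc (0 : ℝ) 1,
          (Real.sqrt (a (k + (n : ℤ)) x) - Real.sqrt (a k x)) ^ 2) :=
  stmt19_general a hnn hint D hD δ hδ N hsep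
end
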